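/- arXiv:2411.15273 — 8 statements merged into one kernel-verified Lean document; each statement's English description precedes it below -/
import Mathlib

section
/- Equip M_n(ℂ) × M_m(ℂ) with the norm ‖(X₁, X₂)‖ = max(‖X₁‖, ‖X₂‖), where each factor carries the operator norm induced by the Euclidean norm. Let A = (A₁, A₂) with ‖A₂‖ < ‖A₁‖. Then for every B = (B₁, B₂) ∈ M_n(ℂ) × M_m(ℂ), the pair A is Birkhoff–James orthogonal to B (with complex scalars) if and only if (A₁, 0) is Birkhoff–James orthogonal to B. -/
open scoped Matrix.Norms.L2Operator

/-- Birkhoff–James orthogonality with complex scalars. -/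
def BJ {E : Type*} [Norm E] [Add E] [SMul ℂ E] (u v : E) : Prop :=
  ∀ c : ℂ, ‖u‖ ≤ ‖u + c • v‖

/-!
Both sides say the same as `A₁ ⊥ B.1`. Since `c ↦ ‖a + c • w.1‖` is convex, `a ⊥ w.1` only
needs a local minimum at `c = 0`; and if `‖b‖ < ‖a‖`, then for `c` near `0` the second component
`‖b + c • w.2‖` stays below `‖a‖`, so it cannot affect the max norm of `(a, b) + c • w`.
-/

open Topology

namespace BJ

variable {E F : Type*} [NormedAddCommGroup E] [NormedSpace ℂ E]
  [NormedAddCommGroup F] [NormedSpace ℂ F]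

lemma convexOn_norm_add_smul (u v : E) : ConvexOn ℝ Set.univ fun c : ℂ => ‖u + c • v‖ := by
  refine ⟨convex_univ, fun x _ y _ s t hs ht hst => ?_⟩
  have hsplit : u + (s • x + t • y) • v = s • (u + x • v) + t • (u + y • v) := by
    rw [add_smul, smul_assoc, smul_assoc, smul_add, smul_add, add_add_add_comm,
      ← add_smul, hst, one_smul]
  calc ‖u + (s • x + t • y) • v‖ = ‖s • (u + x • v) + t • (u + y • v)‖ := by rw [hsplit]
    _ ≤ s * ‖u + x • v‖ + t * ‖u + y • v‖ := by
      refine (norm_add_le _ _).trans_eq ?_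
      rw [norm_smul, norm_smul, Real.norm_of_nonneg hs, Real.norm_of_nonneg ht]
    _ = s • ‖u + x • v‖ + t • ‖u + y • v‖ := rfl

lemma of_isLocalMin {u v : E} (h : IsLocalMin (fun c : ℂ => ‖u + c • v‖) 0) : BJ u v :=
  fun c => by simpa using IsMinOn.of_isLocalMin_of_convex_univ h (convexOn_norm_add_smul u v) c

lemma prod_iff_fst {a : E} {b : F} (h : ‖b‖ < ‖a‖) (w : E × F) : BJ (a, b) w ↔ BJ a w.1 := by
  have hnorm : ‖(a, b)‖ = ‖a‖ := by simpa using h.le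
  constructor
  · intro hw
    refine of_isLocalMin ?_
    have hsnd : ∀ᶠ c : ℂ in 𝓝 0, ‖b + c • w.2‖ < ‖a‖ :=
      (continuous_const.add (continuous_id.smul continuous_const)).norm.continuousAt.eventually_lt
        continuousAt_const (by simpa using h)
    filter_upwards [hsnd] with c hc
    have hmax : ‖a‖ ≤ max ‖a + c • w.1‖ ‖b + c • w.2‖ := hnorm ▸ hw c
    simpa using (le_max_iff.1 hmax).resolve_right hc.not_ge
  · intro hw c
    rw [hnorm]
    exact (hw c).trans (le_max_left _ _)

end BJ

/-- On `M_n(ℂ) × M_m(ℂ)` with the max norm (each factor carrying the Euclidean operator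
norm), if `‖A₂‖ < ‖A₁‖`, then `(A₁, A₂) ⊥ B` iff `(A₁, 0) ⊥ B`. -/
theorem bj_prod_smaller_block {n m : ℕ}
    (A₁ : Matrix (Fin n) (Fin n) ℂ) (A₂ : Matrix (Fin m) (Fin m) ℂ)
    (h : ‖A₂‖ < ‖A₁‖)
    (B : Matrix (Fin n) (Fin n) ℂ × Matrix (Fin m) (Fin m) ℂ) :
    BJ (A₁, A₂) B ↔ BJ (A₁, (0 : Matrix (Fin m) (Fin m) ℂ)) B := by
  have h₀ : ‖(0 : Matrix (Fin m) (Fin m) ℂ)‖ < ‖A₁‖ :=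
    norm_zero.trans_lt ((norm_nonneg _).trans_lt h)
  rw [BJ.prod_iff_fst h, BJ.prod_iff_fst h₀]
end

section
/- Let n ≥ 2 and equip M_n(ℂ) with the operator norm induced by the Euclidean norm, with Birkhoff–James orthogonality taken with complex scalars. For s ≠ t let E_{st} denote the matrix unit with 1 in position (s,t) and 0 elsewhere. Then the intersection over all pairs s ≠ t of the outgoing neighbourhoods (E_{st})^⊥ equals exactly the set of diagonal matrices: a matrix B satisfies E_{st} ⊥ B for all s ≠ t if and only if all off-diagonal entries of B vanish. -/
/-!
A matrix unit `E_st` acts on `ℂⁿ` as the rank-one operator `E = ⟪v, ·⟫ u` with `u = e_s`,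
`v = e_t`, and for unit vectors `u, v` and any operator `T` on a Hilbert space,
`E ⊥ T ↔ ⟪u, T v⟫ = 0`; for `T = B` this inner product is the entry `B s t`.

If `⟪u, T v⟫ = 0`, then `⟪u, (E + c T) v⟫ = 1`, so `‖E + c T‖ ≥ 1 = ‖E‖`.
If `b = ⟪u, T v⟫ ≠ 0`, take `c = ε b̄` with `ε = 1 / (2 ‖T‖²)`. Writing `x = ⟪v, x⟫ v + y`
with `y ⊥ v`, the term `c b = ε |b|²` pushes `‖(E - c T) x‖²` down by `2 ε |b|² |⟪v, x⟫|²`,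
while the cross term through `T y` is absorbed by AM-GM; the result is
`‖(E - c T) x‖² ≤ (1 - ε |b|² / 2) ‖x‖²`, so `‖E - c T‖ < 1`.
-/

open scoped Matrix.Norms.L2Operator

open scoped ComplexConjugate InnerProductSpace
open InnerProductSpace RCLike ContinuousLinearMap

section Hilbert

variable {𝕜 H : Type*} [RCLike 𝕜] [NormedAddCommGroup H] [InnerProductSpace 𝕜 H]

theorem norm_sq_eq_norm_inner_sq_add {v : H} (hv : ‖v‖ = 1) (x : H) :
    ‖x‖ ^ 2 = ‖⟪v, x⟫_𝕜‖ ^ 2 + ‖x - ⟪v, x⟫_𝕜 • v‖ ^ 2 := by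
  have horth : ⟪⟪v, x⟫_𝕜 • v, x - ⟪v, x⟫_𝕜 • v⟫_𝕜 = 0 := by
    rw [inner_smul_left, inner_sub_right, inner_smul_right, inner_self_eq_norm_sq_to_K, hv]
    simp
  have := norm_add_sq_eq_norm_sq_add_norm_sq_of_inner_eq_zero _ _ horth
  rw [add_sub_cancel, norm_smul, hv, mul_one] at this
  simpa only [sq] using this

theorem norm_inner_apply_le_opNorm {u : H} (hu : ‖u‖ = 1) (T : H →L[𝕜] H) (x : H) :
    ‖⟪u, T x⟫_𝕜‖ ≤ ‖T‖ * ‖x‖ :=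
  calc ‖⟪u, T x⟫_𝕜‖ ≤ ‖u‖ * ‖T x‖ := norm_inner_le_norm _ _
    _ ≤ ‖T‖ * ‖x‖ := by rw [hu, one_mul]; exact T.le_opNorm x

theorem norm_inner_mul_sub_le_re_inner {u : H} (hu : ‖u‖ = 1) (T : H →L[𝕜] H) (v x : H) :
    ‖⟪u, T v⟫_𝕜‖ ^ 2 * ‖⟪v, x⟫_𝕜‖ ^ 2 -
        ‖⟪u, T v⟫_𝕜‖ * ‖⟪v, x⟫_𝕜‖ * (‖T‖ * ‖x - ⟪v, x⟫_𝕜 • v‖) ≤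
      re (conj ⟪v, x⟫_𝕜 * (conj ⟪u, T v⟫_𝕜 * ⟪u, T x⟫_𝕜)) := by
  set b := ⟪u, T v⟫_𝕜
  set a := ⟪v, x⟫_𝕜
  set y := x - a • v
  have hTx : ⟪u, T x⟫_𝕜 = a * b + ⟪u, T y⟫_𝕜 := by
    conv_lhs => rw [← add_sub_cancel (a • v) x]
    rw [map_add, map_smul, inner_add_right, inner_smul_right]
  have hsplit : conj a * (conj b * (a * b + ⟪u, T y⟫_𝕜)) =
      ((‖b‖ ^ 2 * ‖a‖ ^ 2 : ℝ) : 𝕜) + conj a * (conj b * ⟪u, T y⟫_𝕜) := by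
    have ha : conj a * a = ((‖a‖ ^ 2 : ℝ) : 𝕜) := by rw [RCLike.conj_mul]; norm_cast
    have hb : conj b * b = ((‖b‖ ^ 2 : ℝ) : 𝕜) := by rw [RCLike.conj_mul]; norm_cast
    push_cast at ha hb ⊢
    linear_combination conj b * b * ha + (‖a‖ : 𝕜) ^ 2 * hb
  have hnorm : ‖conj a * (conj b * ⟪u, T y⟫_𝕜)‖ ≤ ‖b‖ * ‖a‖ * (‖T‖ * ‖y‖) := by
    rw [norm_mul, norm_mul, RCLike.norm_conj, RCLike.norm_conj, ← mul_assoc, mul_comm ‖a‖]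
    exact mul_le_mul_of_nonneg_left (norm_inner_apply_le_opNorm hu T y) (by positivity)
  rw [hTx, hsplit, map_add, RCLike.ofReal_re]
  linarith [(abs_le.mp (RCLike.abs_re_le_norm (conj a * (conj b * ⟪u, T y⟫_𝕜)))).1]

theorem norm_rankOne_sub_smul_apply_sq_le {u v : H} (hu : ‖u‖ = 1) (hv : ‖v‖ = 1)
    (T : H →L[𝕜] H) {ε : ℝ} (hε : 0 ≤ ε) (hεT : 2 * ε * ‖T‖ ^ 2 ≤ 1) (x : H) :
    ‖(rankOne 𝕜 u v - (ε * conj ⟪u, T v⟫_𝕜) • T) x‖ ^ 2 ≤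
      (1 - ε * ‖⟪u, T v⟫_𝕜‖ ^ 2 / 2) * ‖x‖ ^ 2 := by
  set b := ⟪u, T v⟫_𝕜
  set a := ⟪v, x⟫_𝕜 with ha_def
  set y := x - a • v
  set c : 𝕜 := ε * conj b
  have hb : ‖b‖ ≤ ‖T‖ := by simpa [hv] using norm_inner_apply_le_opNorm hu T v
  have hre : re (conj a * (c * ⟪u, T x⟫_𝕜)) =
      ε * re (conj a * (conj b * ⟪u, T x⟫_𝕜)) := by
    rw [← RCLike.re_ofReal_mul]; congr 1; simp only [c]; ring
  have hcross := norm_inner_mul_sub_le_re_inner hu T v x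
  have hexp : ‖(rankOne 𝕜 u v - c • T) x‖ ^ 2 =
      ‖a‖ ^ 2 - 2 * re (conj a * (c * ⟪u, T x⟫_𝕜)) + ‖c‖ ^ 2 * ‖T x‖ ^ 2 := by
    rw [sub_apply, rankOne_apply, smul_apply, ← ha_def, norm_sub_sq (𝕜 := 𝕜), inner_smul_left,
      inner_smul_right, norm_smul, norm_smul, hu]
    ring
  have hc : ‖c‖ = ε * ‖b‖ := by simp [c, abs_of_nonneg hε]
  have hpyth := norm_sq_eq_norm_inner_sq_add (𝕜 := 𝕜) hv x
  rw [← ha_def] at hpyth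
  have hTx_sq : ‖T x‖ ^ 2 ≤ ‖T‖ ^ 2 * ‖x‖ ^ 2 := by
    rw [← mul_pow]; exact pow_le_pow_left₀ (norm_nonneg _) (T.le_opNorm x) 2
  have hεb : ε * ‖b‖ ^ 2 ≤ ε * ‖T‖ ^ 2 :=
    mul_le_mul_of_nonneg_left (pow_le_pow_left₀ (norm_nonneg _) hb 2) hε
  rw [hexp, hc]
  nlinarith [mul_nonneg hε (sq_nonneg (‖b‖ * ‖a‖ - ‖T‖ * ‖y‖)),
    mul_le_mul_of_nonneg_left hTx_sq (by positivity : 0 ≤ (ε * ‖b‖) ^ 2),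
    mul_nonneg (by linarith : 0 ≤ 1 / 2 - ε * ‖T‖ ^ 2) (sq_nonneg ‖y‖),
    mul_nonneg (by linarith : 0 ≤ 1 / 2 - ε * ‖T‖ ^ 2)
      (by positivity : 0 ≤ ε * ‖b‖ ^ 2 * ‖x‖ ^ 2),
    mul_le_mul_of_nonneg_left hcross hε,
    mul_nonneg (by linarith : 0 ≤ 1 / 2 - ε * ‖b‖ ^ 2) (sq_nonneg ‖y‖)]

theorem exists_norm_rankOne_sub_smul_lt_one {u v : H} (hu : ‖u‖ = 1) (hv : ‖v‖ = 1)
    (T : H →L[𝕜] H) (hT : ⟪u, T v⟫_𝕜 ≠ 0) : ∃ c : 𝕜, ‖rankOne 𝕜 u v - c • T‖ < 1 := by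
  set β := ‖⟪u, T v⟫_𝕜‖
  have hβ : 0 < β := norm_pos_iff.mpr hT
  have hβT : β ≤ ‖T‖ := by simpa [hv] using norm_inner_apply_le_opNorm hu T v
  set ε := 1 / (2 * ‖T‖ ^ 2)
  have hT0 : 0 < ‖T‖ := hβ.trans_le hβT
  have hε : 0 < ε := by positivity
  have hεT : 2 * ε * ‖T‖ ^ 2 = 1 := by simp only [ε]; field_simp
  have hεβ : ε * β ^ 2 ≤ 1 / 2 := by
    nlinarith [mul_le_mul_of_nonneg_left (pow_le_pow_left₀ hβ.le hβT 2) hε.le]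
  have hδ : 0 < ε * β ^ 2 := by positivity
  refine ⟨ε * conj ⟪u, T v⟫_𝕜, lt_of_le_of_lt (opNorm_le_bound _ (by linarith) fun x ↦ ?_)
    (by linarith : 1 - ε * β ^ 2 / 4 < 1)⟩
  refine (pow_le_pow_iff_left₀ (norm_nonneg _) (mul_nonneg (by linarith) (norm_nonneg x))
    two_ne_zero).mp ?_
  calc _ ≤ (1 - ε * β ^ 2 / 2) * ‖x‖ ^ 2 :=
        norm_rankOne_sub_smul_apply_sq_le hu hv T hε.le hεT.le x
    _ ≤ ((1 - ε * β ^ 2 / 4) * ‖x‖) ^ 2 := by nlinarith [sq_nonneg (ε * β ^ 2 * ‖x‖)]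

end Hilbert

theorem BJ.rankOne_iff {H : Type*} [NormedAddCommGroup H] [InnerProductSpace ℂ H] {u v : H}
    (hu : ‖u‖ = 1) (hv : ‖v‖ = 1) (T : H →L[ℂ] H) : BJ (rankOne ℂ u v) T ↔ ⟪u, T v⟫_ℂ = 0 := by
  rw [BJ, norm_rankOne, hu, hv, one_mul]
  constructor
  · intro h
    by_contra hT
    obtain ⟨c, hc⟩ := exists_norm_rankOne_sub_smul_lt_one hu hv T hT
    have := h (-c)
    rw [neg_smul, ← sub_eq_add_neg] at this
    linarith
  · intro hT c
    have hinner : ⟪u, (rankOne ℂ u v + c • T) v⟫_ℂ = 1 := by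
      simp [hT, inner_self_eq_norm_sq_to_K, hu, hv]
    have := norm_inner_apply_le_opNorm hu (rankOne ℂ u v + c • T) v
    rwa [hinner, hv, norm_one, mul_one] at this

namespace Matrix

variable {𝕜 ι : Type*} [RCLike 𝕜] [Fintype ι] [DecidableEq ι]

theorem toEuclideanCLM_single_one (s t : ι) :
    toEuclideanCLM (𝕜 := 𝕜) (single s t 1) =
      rankOne 𝕜 (EuclideanSpace.single s 1) (EuclideanSpace.single t 1) := by
  ext x i
  simp [single_mulVec, EuclideanSpace.inner_single_left, Function.update_apply]

theorem inner_single_toEuclideanCLM_single (B : Matrix ι ι 𝕜) (s t : ι) :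
    ⟪EuclideanSpace.single s 1, toEuclideanCLM (𝕜 := 𝕜) B (EuclideanSpace.single t 1)⟫_𝕜 =
      B s t := by
  simp [EuclideanSpace.inner_single_left]

theorem bj_toEuclideanCLM_iff (A B : Matrix ι ι ℂ) :
    BJ (toEuclideanCLM (𝕜 := ℂ) A) (toEuclideanCLM (𝕜 := ℂ) B) ↔ BJ A B := by
  simp only [BJ, ← map_smul, ← map_add, l2_opNorm_toEuclideanCLM]

end Matrix

theorem inter_perp_offdiag_units_eq_diagonal_general {n : ℕ}
    (B : Matrix (Fin n) (Fin n) ℂ) :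
    (∀ s t : Fin n, s ≠ t → BJ (Matrix.single s t (1 : ℂ)) B) ↔
      (∀ s t : Fin n, s ≠ t → B s t = 0) := by
  have key (s t : Fin n) : BJ (Matrix.single s t (1 : ℂ)) B ↔ B s t = 0 := by
    rw [← Matrix.bj_toEuclideanCLM_iff, Matrix.toEuclideanCLM_single_one,
      BJ.rankOne_iff (by simp) (by simp), Matrix.inner_single_toEuclideanCLM_single]
  exact forall₂_congr fun s t ↦ imp_congr_right fun _ ↦ key s t

/-- In `M_n(ℂ)` (`n ≥ 2`, Euclidean operator norm, complex scalars), a matrix `B` lies in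
`(E_{st})^⊥` for all matrix units `E_{st}` with `s ≠ t` iff `B` is diagonal. -/
theorem inter_perp_offdiag_units_eq_diagonal {n : ℕ} (hn : 2 ≤ n)
    (B : Matrix (Fin n) (Fin n) ℂ) :
    (∀ s t : Fin n, s ≠ t → BJ (Matrix.single s t (1 : ℂ)) B) ↔
      (∀ s t : Fin n, s ≠ t → B s t = 0) :=
  inter_perp_offdiag_units_eq_diagonal_general B
end

section
/- Let V = {X ∈ M₂(ℂ) : X₁₁ = 0}, where M₂(ℂ) carries the operator norm induced by the Euclidean norm, and let ⊥ denote Birkhoff–James orthogonality with complex scalars. Then each of the matrix units E₂₂, E₁₂, and E₂₁ is left-symmetric relative to V: for every B ∈ V, if E ⊥ B then B ⊥ E (where E is any of these three matrix units, all of which lie in V). -/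
open scoped Matrix.Norms.L2Operator

/-- `A` is left-symmetric relative to the subset `S`. -/
def LeftSymmRel {E : Type*} [Norm E] [Add E] [SMul ℂ E] (S : Set E) (A : E) : Prop :=
  A ∈ S ∧ ∀ B ∈ S, BJ A B → BJ B A

/-- The subspace `V = {X ∈ M₂(ℂ) : X₁₁ = 0}`. -/
def V : Set (Matrix (Fin 2) (Fin 2) ℂ) := {X | X 0 0 = 0}

/-! A matrix unit `E = E_ij` has operator norm and Frobenius norm both equal to `1`, and the
Frobenius norm (the Euclidean norm of `A.vec`) dominates the operator norm. Hence `E ⊥ B` for the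
operator norm gives `E ⊥ B` in the Frobenius inner product space, i.e. `B_ij = 0`. For `B ∈ V`
this leaves `B` supported on one column (`E = E₂₁`; the case `E₁₂` is its conjugate transpose)
or on the antidiagonal (`E = E₂₂`). In the first case `‖B‖` is the Euclidean norm of that column,
in the second `BᴴB` is diagonal and `‖B‖` is the larger of the two entries; in both cases these
entries are untouched by adding `c • E`, and they bound `‖B + c • E‖` from below. -/

open RCLike ComplexConjugate in
theorem inner_eq_zero_of_forall_norm_le_norm_add_smul {𝕜 E : Type*} [RCLike 𝕜]
    [NormedAddCommGroup E] [InnerProductSpace 𝕜 E] {x y : E}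
    (h : ∀ c : 𝕜, ‖x‖ ≤ ‖x + c • y‖) : inner 𝕜 x y = 0 := by
  set a := inner 𝕜 x y
  set t : ℝ := 1 / (1 + ‖y‖ ^ 2)
  have ht : 0 < t := by positivity
  have hty : t * ‖y‖ ^ 2 < 1 := by
    rw [one_div_mul_eq_div, div_lt_one (by positivity)]; linarith
  -- `c = -t * conj a` changes `‖x + c • y‖²` by `t ‖a‖² (t ‖y‖² - 2)`, negative unless `a = 0`
  have key := h (-(t : 𝕜) * conj a)
  rw [← sq_le_sq₀ (norm_nonneg _) (norm_nonneg _), norm_add_sq (𝕜 := 𝕜), inner_smul_right,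
    mul_assoc, RCLike.conj_mul, norm_smul, norm_mul, norm_neg, norm_conj, norm_ofReal,
    abs_of_pos ht, ← ofReal_pow, ← ofReal_neg, ← ofReal_mul, ofReal_re] at key
  have ha : ‖a‖ ^ 2 * (t * (2 - t * ‖y‖ ^ 2)) ≤ 0 := by nlinarith
  simpa using nonpos_of_mul_nonpos_left ha (mul_pos ht (by linarith))

namespace Matrix

variable {𝕜 m n : Type*} [RCLike 𝕜] [Fintype m] [Fintype n]

theorem norm_toLp_vec_sq (A : Matrix m n 𝕜) :
    ‖WithLp.toLp 2 A.vec‖ ^ 2 = ∑ i, ∑ j, ‖A i j‖ ^ 2 := by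
  rw [EuclideanSpace.norm_sq_eq, Fintype.sum_prod_type, Finset.sum_comm]
  rfl

variable [DecidableEq n]

theorem l2_opNorm_le_norm_toLp_vec (A : Matrix m n 𝕜) : ‖A‖ ≤ ‖WithLp.toLp 2 A.vec‖ := by
  rw [l2_opNorm_def]
  refine ContinuousLinearMap.opNorm_le_bound _ (norm_nonneg _) fun x => ?_
  rw [← sq_le_sq₀ (norm_nonneg _) (by positivity), mul_pow, norm_toLp_vec_sq,
    EuclideanSpace.norm_sq_eq, EuclideanSpace.norm_sq_eq, Finset.sum_mul]
  refine Finset.sum_le_sum fun i _ => ?_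
  calc ‖∑ j, A i j * x j‖ ^ 2 ≤ (∑ j, ‖A i j‖ * ‖x j‖) ^ 2 := by
        gcongr
        exact (norm_sum_le _ _).trans_eq (by simp_rw [norm_mul])
    _ ≤ (∑ j, ‖A i j‖ ^ 2) * ∑ j, ‖x j‖ ^ 2 := Finset.sum_mul_sq_le_sq_mul_sq _ _ _

theorem sum_norm_sq_le_l2_opNorm_sq (A : Matrix m n 𝕜) (j : n) :
    ∑ i, ‖A i j‖ ^ 2 ≤ ‖A‖ ^ 2 := by
  have h := A.l2_opNorm_mulVec (EuclideanSpace.single j 1)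
  simp only [PiLp.norm_single, norm_one, mul_one, PiLp.ofLp_single, mulVec_single_one] at h
  have := pow_le_pow_left₀ (norm_nonneg _) h 2
  rwa [EuclideanSpace.norm_sq_eq] at this

theorem norm_apply_le_l2_opNorm (A : Matrix m n 𝕜) (i : m) (j : n) : ‖A i j‖ ≤ ‖A‖ := by
  refine (sq_le_sq₀ (norm_nonneg _) (norm_nonneg _)).mp ?_
  exact (Finset.single_le_sum (fun k _ => sq_nonneg ‖A k j‖) (Finset.mem_univ i)).trans
    (A.sum_norm_sq_le_l2_opNorm_sq j)

theorem apply_eq_zero_of_bj_single [DecidableEq m] {i : m} {j : n} {B : Matrix m n ℂ}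
    (h : BJ (single i j (1 : ℂ)) B) : B i j = 0 := by
  set e : EuclideanSpace ℂ (n × m) := WithLp.toLp 2 (single i j (1 : ℂ)).vec
  have he : ‖e‖ ≤ ‖single i j (1 : ℂ)‖ := by
    simpa [e, vec_single] using norm_apply_le_l2_opNorm (single i j (1 : ℂ)) i j
  have horth : inner ℂ e (WithLp.toLp 2 B.vec) = 0 :=
    inner_eq_zero_of_forall_norm_le_norm_add_smul fun c =>
      calc ‖e‖ ≤ ‖single i j (1 : ℂ) + c • B‖ := he.trans (h c)
        _ ≤ ‖WithLp.toLp 2 (single i j 1 + c • B).vec‖ := l2_opNorm_le_norm_toLp_vec _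
        _ = ‖e + c • WithLp.toLp 2 B.vec‖ := rfl
  simpa [e, vec_single, EuclideanSpace.inner_single_left] using horth

theorem l2_opNorm_antidiagonal_le (p q : 𝕜) : ‖!![0, p; q, 0]‖ ≤ max ‖p‖ ‖q‖ := by
  have hsq : !![0, p; q, 0]ᴴ * !![0, p; q, 0] = diagonal ![(‖q‖ : 𝕜) ^ 2, (‖p‖ : 𝕜) ^ 2] := by
    ext i j
    fin_cases i <;> fin_cases j <;> simp [mul_apply, RCLike.conj_mul]
  have hdiag : ‖diagonal ![(‖q‖ : 𝕜) ^ 2, (‖p‖ : 𝕜) ^ 2]‖ ≤ max ‖p‖ ‖q‖ ^ 2 := by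
    rw [l2_opNorm_diagonal, pi_norm_le_iff_of_nonneg (by positivity)]
    intro i
    fin_cases i
    · simpa using pow_le_pow_left₀ (norm_nonneg _) (le_max_right ‖p‖ ‖q‖) 2
    · simpa using pow_le_pow_left₀ (norm_nonneg _) (le_max_left ‖p‖ ‖q‖) 2
  rw [← sq_le_sq₀ (norm_nonneg _) (by positivity), sq, ← l2_opNorm_conjTranspose_mul_self, hsq]
  exact hdiag

theorem bj_of_eq_zero_off_col {j : n} {B E : Matrix m n ℂ} (hB : ∀ i k, k ≠ j → B i k = 0)
    (hE : ∀ i, E i j = 0) : BJ B E := by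
  intro c
  have hcol : ∀ i, (B + c • E) i j = B i j := by simp [hE]
  refine (sq_le_sq₀ (norm_nonneg _) (norm_nonneg _)).mp ?_
  calc ‖B‖ ^ 2 ≤ ‖WithLp.toLp 2 B.vec‖ ^ 2 := by gcongr; exact l2_opNorm_le_norm_toLp_vec B
    _ = ∑ i, ‖B i j‖ ^ 2 := by
        rw [norm_toLp_vec_sq]
        refine Finset.sum_congr rfl fun i _ => Finset.sum_eq_single j (fun k _ hk => ?_) (by simp)
        simp [hB i k hk]
    _ = ∑ i, ‖(B + c • E) i j‖ ^ 2 := by simp_rw [hcol]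
    _ ≤ ‖B + c • E‖ ^ 2 := sum_norm_sq_le_l2_opNorm_sq _ j

theorem bj_of_eq_zero_diag_of_eq_zero_antidiag {B E : Matrix (Fin 2) (Fin 2) ℂ}
    (hB₀ : B 0 0 = 0) (hB₁ : B 1 1 = 0) (hE₀ : E 0 1 = 0) (hE₁ : E 1 0 = 0) : BJ B E := by
  intro c
  calc ‖B‖ = ‖!![0, B 0 1; B 1 0, 0]‖ := by conv_lhs => rw [eta_fin_two B, hB₀, hB₁]
    _ ≤ max ‖B 0 1‖ ‖B 1 0‖ := l2_opNorm_antidiagonal_le _ _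
    _ ≤ ‖B + c • E‖ := by
        refine max_le ?_ ?_
        · simpa [hE₀] using norm_apply_le_l2_opNorm (B + c • E) 0 1
        · simpa [hE₁] using norm_apply_le_l2_opNorm (B + c • E) 1 0

end Matrix

open Matrix

theorem BJ.conjTranspose {m n : Type*} [Fintype m] [Fintype n] [DecidableEq m] [DecidableEq n]
    {A B : Matrix m n ℂ} (h : BJ A B) : BJ Aᴴ Bᴴ := fun c =>
  calc ‖Aᴴ‖ = ‖A‖ := l2_opNorm_conjTranspose A
    _ ≤ ‖A + star c • B‖ := h (star c)
    _ = ‖Aᴴ + c • Bᴴ‖ := by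
      rw [← l2_opNorm_conjTranspose, conjTranspose_add, conjTranspose_smul, star_star]

theorem LeftSymmRel.conjTranspose {n : Type*} [Fintype n] [DecidableEq n]
    {S : Set (Matrix n n ℂ)} (hS : ∀ X ∈ S, Xᴴ ∈ S) {A : Matrix n n ℂ} (h : LeftSymmRel S A) :
    LeftSymmRel S Aᴴ :=
  ⟨hS A h.1, fun B hB hAB => by
    simpa using BJ.conjTranspose (h.2 Bᴴ (hS B hB) (by simpa using BJ.conjTranspose hAB))⟩

theorem conjTranspose_mem_V {X : Matrix (Fin 2) (Fin 2) ℂ} (hX : X ∈ V) : Xᴴ ∈ V := by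
  simp_all [V]

theorem leftSymmRel_V_single_one_one : LeftSymmRel V (single 1 1 (1 : ℂ)) :=
  ⟨by simp [V], fun B hB hEB =>
    bj_of_eq_zero_diag_of_eq_zero_antidiag hB (apply_eq_zero_of_bj_single hEB) (by simp) (by simp)⟩

theorem leftSymmRel_V_single_one_zero : LeftSymmRel V (single 1 0 (1 : ℂ)) := by
  refine ⟨by simp [V], fun B hB hEB => bj_of_eq_zero_off_col (j := 1) ?_ (by simp)⟩
  have hB₁ : B 1 0 = 0 := apply_eq_zero_of_bj_single hEB
  intro i k hk
  fin_cases i <;> fin_cases k <;> simp_all [V]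

/-- Each of the matrix units `E₂₂`, `E₁₂`, `E₂₁` is left-symmetric relative to
`V = {X ∈ M₂(ℂ) : X₁₁ = 0}` (Euclidean operator norm, complex scalars). -/
theorem matrix_units_leftSymmetric_in_V :
    LeftSymmRel V (Matrix.single 1 1 (1 : ℂ)) ∧
    LeftSymmRel V (Matrix.single 0 1 (1 : ℂ)) ∧
    LeftSymmRel V (Matrix.single 1 0 (1 : ℂ)) := by
  refine ⟨leftSymmRel_V_single_one_one, ?_, leftSymmRel_V_single_one_zero⟩
  simpa [conjTranspose_single] using
    leftSymmRel_V_single_one_zero.conjTranspose fun _ => conjTranspose_mem_V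
end

section
/- Regard M₂(ℂ), with the operator norm induced by the Euclidean norm, as a normed space over ℝ, so that Birkhoff–James orthogonality uses only real scalars: u ⊥ᵣ v iff ‖u + t·v‖ ≥ ‖u‖ for all t ∈ ℝ. Let V = {X ∈ M₂(ℂ) : X₁₁ = 0}. Then the matrix unit E₂₂ is left-symmetric relative to V with respect to ⊥ᵣ: for every B ∈ V, if E₂₂ ⊥ᵣ B then B ⊥ᵣ E₂₂. -/
open scoped Matrix.Norms.L2Operator

/-- Birkhoff–James orthogonality with real scalars. -/
def BJr {E : Type*} [Norm E] [Add E] [SMul ℝ E] (u v : E) : Prop :=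
  ∀ t : ℝ, ‖u‖ ≤ ‖u + t • v‖

/-- `A` is left-symmetric relative to the subset `S` (real scalars). -/
def LeftSymmRelR {E : Type*} [Norm E] [Add E] [SMul ℝ E] (S : Set E) (A : E) : Prop :=
  A ∈ S ∧ ∀ B ∈ S, BJr A B → BJr B A

/-!
The operator norm is dominated by the Frobenius norm, and the two agree on `E₂₂`. So
`E₂₂ ⊥ᵣ B` for the operator norm implies `E₂₂ ⊥ᵣ B` for the Frobenius norm, which comes from a
real inner product; there Birkhoff–James orthogonality is ordinary orthogonality, i.e.
`Re B₂₂ = 0`. Hence `|B₂₂| ≤ |B₂₂ + t|` for all real `t`.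

For `X = [[0, b], [c, z]]`, conjugating by diagonal unitaries multiplies `z` by any unimodular
scalar while fixing `b` and `c` (this uses `X₁₁ = 0`), so `‖X‖` depends on `z` only through `|z|`.
Then `r ↦ ‖[[0, b], [c, r]]‖` is convex and even on `ℝ`, hence nondecreasing in `|r|`, which gives
`‖B‖ ≤ ‖B + t • E₂₂‖`.
-/

open Matrix WithLp

theorem norm_add_smul_le_of_abs_le {E : Type*} [SeminormedAddCommGroup E] [NormedSpace ℝ E]
    {u v : E} (heven : ∀ t : ℝ, ‖u + (-t) • v‖ = ‖u + t • v‖) {s t : ℝ} (hst : |s| ≤ |t|) :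
    ‖u + s • v‖ ≤ ‖u + t • v‖ := by
  set f : ℝ → ℝ := fun r => ‖u + r • v‖
  have hconvex : ConvexOn ℝ Set.univ f := by
    simpa [f, Function.comp_def, AffineMap.lineMap_apply, add_comm]
      using convexOn_univ_norm.comp_affineMap (AffineMap.lineMap u (u + v))
  have habs : f |t| = f t := by
    rcases abs_choice t with h | h <;> simp only [f, h, heven]
  have hseg : s ∈ segment ℝ (-|t|) |t| := by
    rw [segment_eq_Icc (neg_le_self (abs_nonneg t))]
    exact abs_le.mp hst
  calc f s ≤ max (f (-|t|)) (f |t|) := hconvex.le_on_segment trivial trivial hseg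
    _ = f t := by simp only [f, heven, habs, max_self]

theorem inner_eq_zero_of_BJr {F : Type*} [SeminormedAddCommGroup F] [InnerProductSpace ℝ F]
    {a b : F} (h : BJr a b) : inner ℝ a b = 0 := by
  have hquad (t : ℝ) : 0 ≤ ‖b‖ ^ 2 * (t * t) + 2 * inner ℝ a b * t + 0 := by
    have := pow_le_pow_left₀ (norm_nonneg a) (h t) 2
    rw [norm_add_sq_real, norm_smul, inner_smul_right, Real.norm_eq_abs, mul_pow, sq_abs] at this
    linarith
  have hdiscrim := discrim_le_zero hquad
  rw [discrim] at hdiscrim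
  nlinarith

namespace Matrix

variable {𝕜 : Type*} [RCLike 𝕜] {m n : Type*} [Fintype m] [Fintype n] [DecidableEq n]

theorem l2_opNorm_le_frobenius (A : Matrix m n 𝕜) :
    ‖A‖ ≤ ‖(toLp 2 fun p : m × n => A p.1 p.2 : EuclideanSpace 𝕜 (m × n))‖ := by
  rw [l2_opNorm_def]
  refine ContinuousLinearMap.opNorm_le_bound _ (norm_nonneg _) fun x => ?_
  refine (sq_le_sq₀ (norm_nonneg _) (by positivity)).mp ?_
  have hrow (i : m) : ‖(A *ᵥ ofLp x) i‖ ^ 2 ≤ (∑ j, ‖A i j‖ ^ 2) * ∑ j, ‖x j‖ ^ 2 :=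
    calc ‖(A *ᵥ ofLp x) i‖ ^ 2 ≤ (∑ j, ‖A i j‖ * ‖x j‖) ^ 2 := by
          gcongr
          simpa [mulVec, dotProduct] using norm_sum_le Finset.univ fun j => A i j * x j
      _ ≤ _ := Finset.sum_mul_sq_le_sq_mul_sq _ _ _
  rw [EuclideanSpace.norm_sq_eq, mul_pow, EuclideanSpace.norm_sq_eq, EuclideanSpace.norm_sq_eq,
    Fintype.sum_prod_type, Finset.sum_mul]
  exact Finset.sum_le_sum fun i _ => hrow i

theorem diagonal_mem_unitary {v : n → 𝕜} (hv : ∀ i, ‖v i‖ = 1) :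
    diagonal v ∈ unitary (Matrix n n 𝕜) := by
  rw [← unitaryGroup, mem_unitaryGroup_iff, star_eq_conjTranspose, diagonal_conjTranspose,
    diagonal_mul_diagonal, ← diagonal_one]
  congr 1
  ext i
  simp [RCLike.mul_conj, hv]

theorem l2_opNorm_single_one (i : n) : ‖(single i i 1 : Matrix n n 𝕜)‖ = 1 := by
  rw [← diagonal_single, l2_opNorm_diagonal, Pi.norm_single, norm_one]

theorem re_apply_eq_zero_of_BJr_single {i : n} {B : Matrix n n ℂ} (h : BJr (single i i 1) B) :
    (B i i).re = 0 := by
  let vec (A : Matrix n n ℂ) : EuclideanSpace ℂ (n × n) := toLp 2 fun p => A p.1 p.2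
  have hvec : vec (single i i 1) = EuclideanSpace.single (i, i) 1 := by
    ext ⟨j, k⟩
    simp [vec, single_apply, Prod.ext_iff, eq_comm]
  have horth : inner ℝ (vec (single i i 1)) (vec B) = 0 := inner_eq_zero_of_BJr fun t =>
    calc ‖vec (single i i 1)‖ = ‖(single i i 1 : Matrix n n ℂ)‖ := by
          rw [hvec, l2_opNorm_single_one, PiLp.norm_single, norm_one]
      _ ≤ ‖single i i 1 + t • B‖ := h t
      _ ≤ ‖vec (single i i 1 + t • B)‖ := l2_opNorm_le_frobenius _
      _ = ‖vec (single i i 1) + t • vec B‖ := rfl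
  simpa [hvec, PiLp.inner_apply, vec, apply_ite Complex.re] using horth

theorem l2_opNorm_fin_two_zero_eq_of_norm_eq (b c : ℂ) {z w : ℂ} (h : ‖z‖ = ‖w‖) :
    ‖!![0, b; c, z]‖ = ‖!![0, b; c, w]‖ := by
  rcases eq_or_ne z 0 with rfl | hz
  · rw [norm_zero, eq_comm, norm_eq_zero] at h
    rw [h]
  set ω := w / z
  have hω : ‖ω‖ = 1 := by rw [norm_div, ← h, div_self (norm_ne_zero_iff.mpr hz)]
  have hω0 : ω ≠ 0 := norm_ne_zero_iff.mp (by rw [hω]; exact one_ne_zero)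
  have hconj : !![0, b; c, w] = diagonal ![1, ω] * !![0, b; c, z] * diagonal ![ω⁻¹, 1] := by
    ext i j
    fin_cases i <;> fin_cases j <;> simp [mul_apply, Fin.sum_univ_two]
    · field_simp
    · exact (div_mul_cancel₀ w hz).symm
  have hU₁ : diagonal ![1, ω] ∈ unitary (Matrix (Fin 2) (Fin 2) ℂ) :=
    diagonal_mem_unitary (by simp [Fin.forall_fin_two, hω])
  have hU₂ : diagonal ![ω⁻¹, 1] ∈ unitary (Matrix (Fin 2) (Fin 2) ℂ) :=
    diagonal_mem_unitary (by simp [Fin.forall_fin_two, hω])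
  rw [hconj, CStarRing.norm_mul_mem_unitary _ hU₂, CStarRing.norm_mem_unitary_mul _ hU₁]

theorem l2_opNorm_fin_two_zero_le_of_norm_le (b c : ℂ) {z w : ℂ} (h : ‖z‖ ≤ ‖w‖) :
    ‖!![0, b; c, z]‖ ≤ ‖!![0, b; c, w]‖ := by
  have hsplit (r : ℝ) : !![0, b; c, (r : ℂ)] = !![0, b; c, 0] + r • single 1 1 1 := by
    ext i j
    fin_cases i <;> fin_cases j <;> simp
  have heven (r : ℝ) :
      ‖!![0, b; c, 0] + (-r) • single 1 1 1‖ = ‖!![0, b; c, 0] + r • single 1 1 1‖ := by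
    rw [← hsplit, ← hsplit]
    exact l2_opNorm_fin_two_zero_eq_of_norm_eq b c (by simp)
  calc ‖!![0, b; c, z]‖ = ‖!![0, b; c, (‖z‖ : ℂ)]‖ :=
        l2_opNorm_fin_two_zero_eq_of_norm_eq b c (by simp)
    _ ≤ ‖!![0, b; c, (‖w‖ : ℂ)]‖ := by
      rw [hsplit, hsplit]
      exact norm_add_smul_le_of_abs_le heven (by simpa using h)
    _ = ‖!![0, b; c, w]‖ := l2_opNorm_fin_two_zero_eq_of_norm_eq b c (by simp)

end Matrix

/-- Regarding `M₂(ℂ)` (Euclidean operator norm) as a real normed space, the matrix unit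
`E₂₂` is left-symmetric relative to `V = {X ∈ M₂(ℂ) : X₁₁ = 0}` w.r.t. real-scalar
Birkhoff–James orthogonality. -/
theorem E22_leftSymmetric_in_V_real :
    LeftSymmRelR V (Matrix.single 1 1 (1 : ℂ)) := by
  refine ⟨by simp [V], fun B (hB : B 0 0 = 0) hEB t => ?_⟩
  have hre : (B 1 1).re = 0 := re_apply_eq_zero_of_BJr_single hEB
  have hB' : B = !![0, B 0 1; B 1 0, B 1 1] := by
    ext i j; fin_cases i <;> fin_cases j <;> simp [hB]
  have hBt : B + t • single 1 1 1 = !![0, B 0 1; B 1 0, B 1 1 + t] := by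
    ext i j; fin_cases i <;> fin_cases j <;> simp [hB]
  rw [hBt]
  conv_lhs => rw [hB']
  refine l2_opNorm_fin_two_zero_le_of_norm_le _ _ ?_
  calc ‖B 1 1‖ = |(B 1 1 + t).im| := by simp [Complex.abs_im_eq_norm.mpr hre]
    _ ≤ ‖B 1 1 + t‖ := Complex.abs_im_le_norm _
end

section
/- Regard M₂(ℂ), with the operator norm induced by the Euclidean norm, as a normed space over ℝ, so that Birkhoff–James orthogonality uses only real scalars: u ⊥ᵣ v iff ‖u + t·v‖ ≥ ‖u‖ for all t ∈ ℝ. Let V = {X ∈ M₂(ℂ) : X₁₁ = 0}, and let L_V be the set of elements of V that are left-symmetric relative to V with respect to ⊥ᵣ. Then L_V contains a nonzero element, and the only X ∈ V satisfying Z ⊥ᵣ X for all Z ∈ L_V is X = 0. -/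
/-!
The matrix units `single i j c` with `(i, j) ≠ (0, 0)` are left-symmetric in `V` and detect
every entry of an element of `V`.

A rank-one matrix has operator norm equal to its Frobenius norm, and the Frobenius norm dominates
the operator norm everywhere. Hence `single i j c ⊥ᵣ B` forces orthogonality for the Frobenius
inner product, `Re (B i j * conj c) = 0`; taking `c = X i j` kills the entry `X i j`.

Conversely, for `B ∈ V` a pair of diagonal unitaries rotates the phase of the entry `(i, j)` and
fixes the other entries (this needs `B 0 0 = 0`). So `‖B‖` is a convex function of `B i j`
depending only on `|B i j|`, hence nondecreasing in `|B i j|`, and `Re (B i j * conj c) = 0`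
gives `|B i j + t c| ≥ |B i j|`, i.e. `B ⊥ᵣ single i j c`.
-/

open scoped Matrix.Norms.L2Operator

open RealInnerProductSpace in
theorem BJr.inner_eq_zero {F : Type*} [NormedAddCommGroup F] [InnerProductSpace ℝ F] {u v : F}
    (h : BJr u v) : ⟪u, v⟫ = 0 := by
  have key (t : ℝ) : 0 ≤ t * (2 * ⟪u, v⟫ + t * ‖v‖ ^ 2) := by
    have := pow_le_pow_left₀ (norm_nonneg u) (h t) 2
    rw [norm_add_sq_real, real_inner_smul_right, norm_smul, mul_pow, Real.norm_eq_abs,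
      sq_abs] at this
    linarith
  have hpos : 0 < ‖v‖ ^ 2 + 1 := by positivity
  have := key (-⟪u, v⟫ / (‖v‖ ^ 2 + 1))
  field_simp at this
  nlinarith [sq_nonneg ⟪u, v⟫, sq_nonneg ‖v‖]

theorem BJr.map_of_norm_le {E F : Type*} [SeminormedAddCommGroup E] [Module ℝ E]
    [SeminormedAddCommGroup F] [Module ℝ F] (T : E →ₗ[ℝ] F) (hT : ∀ x, ‖x‖ ≤ ‖T x‖) {u v : E}
    (hu : ‖T u‖ ≤ ‖u‖) (h : BJr u v) : BJr (T u) (T v) := fun t =>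
  calc ‖T u‖ ≤ ‖u‖ := hu
    _ ≤ ‖u + t • v‖ := h t
    _ ≤ ‖T (u + t • v)‖ := hT _
    _ = ‖T u + t • T v‖ := by rw [map_add, map_smul]

theorem Complex.norm_le_norm_add_ofReal_mul {z w : ℂ} (h : (z * starRingEnd ℂ w).re = 0)
    (t : ℝ) : ‖z‖ ≤ ‖z + t * w‖ := by
  rw [← sq_le_sq₀ (norm_nonneg _) (norm_nonneg _), Complex.sq_norm, Complex.sq_norm,
    Complex.normSq_add, map_mul (starRingEnd ℂ), Complex.conj_ofReal, mul_left_comm,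
    Complex.re_ofReal_mul, h, mul_zero, mul_zero, add_zero]
  exact le_add_of_nonneg_right (Complex.normSq_nonneg _)

theorem norm_add_smul_le_of_norm_le {E : Type*} [SeminormedAddCommGroup E] [NormedSpace ℂ E]
    {x y : E} (hrot : ∀ u z : ℂ, ‖u‖ = 1 → ‖x + (u * z) • y‖ = ‖x + z • y‖) {z w : ℂ}
    (h : ‖z‖ ≤ ‖w‖) : ‖x + z • y‖ ≤ ‖x + w • y‖ := by
  rcases eq_or_ne w 0 with rfl | hw
  · rw [norm_eq_zero.mp (h.trans_eq norm_zero |>.antisymm (norm_nonneg z))]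
  set e := Complex.exp (z.arg * Complex.I)
  set R := ‖w‖
  set r := ‖z‖
  have hR : 0 < R := norm_pos_iff.mpr hw
  have hR' : (R : ℂ) ≠ 0 := by exact_mod_cast hR.ne'
  have hRw (s : ℂ) (hs : ‖s‖ = 1) : ‖x + (R * s) • y‖ = ‖x + w • y‖ := by
    rw [show (R : ℂ) * s = (R * s / w) * w by field_simp]
    refine hrot _ _ ?_
    rw [norm_div, norm_mul, hs, Complex.norm_real, Real.norm_of_nonneg hR.le, mul_one,
      div_self hR.ne']
  -- `z = r e` is a convex combination of `R e` and `-(R e)`.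
  have hsplit : x + z • y = (((R + r) / (2 * R) : ℝ) : ℂ) • (x + (R * e) • y)
      + (((R - r) / (2 * R) : ℝ) : ℂ) • (x + (-(R * e)) • y) := by
    rw [← Complex.norm_mul_exp_arg_mul_I z]
    match_scalars <;> field_simp <;> ring
  have he : ‖e‖ = 1 := Complex.norm_exp_ofReal_mul_I _
  calc ‖x + z • y‖
      ≤ (R + r) / (2 * R) * ‖x + (R * e) • y‖ + (R - r) / (2 * R) * ‖x + (-(R * e)) • y‖ := by
        rw [hsplit]
        refine (norm_add_le _ _).trans_eq ?_
        rw [norm_smul, norm_smul, Complex.norm_real, Complex.norm_real,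
          Real.norm_of_nonneg (by positivity),
          Real.norm_of_nonneg (div_nonneg (by linarith) (by positivity))]
    _ = ‖x + w • y‖ := by
        rw [hRw e he, ← mul_neg, hRw (-e) (by rwa [norm_neg])]
        field_simp
        ring

namespace Matrix

variable {m n : Type*}

def toEuclideanEntries : Matrix m n ℂ →ₗ[ℝ] EuclideanSpace ℂ (m × n) where
  toFun M := WithLp.toLp 2 fun p => M p.1 p.2
  map_add' _ _ := rfl
  map_smul' _ _ := rfl

@[simp]
theorem toEuclideanEntries_apply (M : Matrix m n ℂ) (p : m × n) :
    toEuclideanEntries M p = M p.1 p.2 :=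
  rfl

theorem toEuclideanEntries_single [DecidableEq m] [DecidableEq n] (i : m) (j : n) (c : ℂ) :
    toEuclideanEntries (single i j c) = EuclideanSpace.single (i, j) c := by
  ext ⟨k, l⟩
  simp [single_apply, Prod.ext_iff, eq_comm]

variable [Fintype m] [Fintype n]

theorem norm_toEuclideanEntries_sq (M : Matrix m n ℂ) :
    ‖toEuclideanEntries M‖ ^ 2 = ∑ i, ∑ j, ‖M i j‖ ^ 2 := by
  rw [EuclideanSpace.norm_sq_eq, Fintype.sum_prod_type]
  rfl

theorem l2_opNorm_le_norm_toEuclideanEntries [DecidableEq n] (M : Matrix m n ℂ) :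
    ‖M‖ ≤ ‖toEuclideanEntries M‖ := by
  rw [l2_opNorm_def]
  refine ContinuousLinearMap.opNorm_le_bound _ (norm_nonneg _) fun x => ?_
  rw [← pow_le_pow_iff_left₀ (norm_nonneg _) (by positivity) two_ne_zero, mul_pow,
    norm_toEuclideanEntries_sq, EuclideanSpace.norm_sq_eq, EuclideanSpace.norm_sq_eq,
    Finset.sum_mul]
  gcongr with i
  calc ‖∑ j, M i j * x j‖ ^ 2 ≤ (∑ j, ‖M i j‖ * ‖x j‖) ^ 2 := by
        gcongr
        exact (norm_sum_le _ _).trans_eq (by simp_rw [norm_mul])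
    _ ≤ (∑ j, ‖M i j‖ ^ 2) * ∑ j, ‖x j‖ ^ 2 := Finset.sum_mul_sq_le_sq_mul_sq _ _ _

section single

variable [DecidableEq m] [DecidableEq n]

theorem l2_opNorm_single (i : m) (j : n) (c : ℂ) : ‖single i j c‖ = ‖c‖ := by
  refine le_antisymm ?_ ?_
  · simpa [toEuclideanEntries_single] using l2_opNorm_le_norm_toEuclideanEntries (single i j c)
  · have hcol : (single i j c).col j = Pi.single i c := by
      ext k
      simp [single_apply, Pi.single_apply, eq_comm]
    simpa [hcol] using l2_opNorm_mulVec (single i j c) (EuclideanSpace.single j 1)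

theorem re_mul_conj_eq_zero_of_bJr_single {i : m} {j : n} {c : ℂ} {B : Matrix m n ℂ}
    (h : BJr (single i j c) B) : (B i j * starRingEnd ℂ c).re = 0 := by
  have hT : ‖toEuclideanEntries (single i j c)‖ ≤ ‖single i j c‖ := by
    rw [toEuclideanEntries_single, PiLp.norm_single, l2_opNorm_single]
  have := (h.map_of_norm_le _ l2_opNorm_le_norm_toEuclideanEntries hT).inner_eq_zero
  rw [toEuclideanEntries_single, PiLp.inner_apply,
    Fintype.sum_eq_single (i, j) fun p hp => by simp [hp]] at this
  simpa using this

end single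

section unitary

variable {𝕜 : Type*} [RCLike 𝕜] [DecidableEq n]

theorem diagonal_mem_unitary_s11 {d : n → 𝕜} (hd : ∀ k, ‖d k‖ = 1) :
    diagonal d ∈ unitary (Matrix n n 𝕜) := by
  rw [← unitaryGroup, mem_unitaryGroup_iff, star_eq_conjTranspose, diagonal_conjTranspose,
    diagonal_mul_diagonal, ← diagonal_one]
  congr 1
  ext k
  simp [RCLike.mul_conj, hd]

theorem l2_opNorm_diagonal_mul_mul_diagonal {α β : n → 𝕜} (hα : ∀ k, ‖α k‖ = 1)
    (hβ : ∀ k, ‖β k‖ = 1) (M : Matrix n n 𝕜) : ‖diagonal α * M * diagonal β‖ = ‖M‖ := by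
  rw [CStarRing.norm_mul_mem_unitary _ (diagonal_mem_unitary_s11 hβ),
    CStarRing.norm_mem_unitary_mul _ (diagonal_mem_unitary_s11 hα)]

end unitary

end Matrix

open Matrix

theorem norm_add_mul_smul_single_of_mem_V {x : Matrix (Fin 2) (Fin 2) ℂ} (hx : x ∈ V)
    {i j : Fin 2} (hij : (i, j) ≠ (0, 0)) (hxij : x i j = 0) {u : ℂ} (hu : ‖u‖ = 1) (z : ℂ) :
    ‖x + (u * z) • single i j 1‖ = ‖x + z • single i j 1‖ := by
  have hx : x 0 0 = 0 := hx
  have hu' : u * starRingEnd ℂ u = 1 := by simp [Complex.mul_conj', hu]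
  obtain ⟨α, β, hα, hβ, h⟩ : ∃ α β : Fin 2 → ℂ, (∀ k, ‖α k‖ = 1) ∧ (∀ k, ‖β k‖ = 1) ∧
      x + (u * z) • single i j 1 = diagonal α * (x + z • single i j 1) * diagonal β := by
    fin_cases i <;> fin_cases j <;> simp at hij hxij
    · refine ⟨![u, 1], 1, fun k => by fin_cases k <;> simp [hu], fun k => by simp, ?_⟩
      ext a b; fin_cases a <;> fin_cases b <;> simp [hx, hxij]
    · refine ⟨1, ![u, 1], fun k => by simp, fun k => by fin_cases k <;> simp [hu], ?_⟩
      ext a b; fin_cases a <;> fin_cases b <;> simp [hx, hxij, mul_comm]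
    · refine ⟨![1, u], ![starRingEnd ℂ u, 1], fun k => by fin_cases k <;> simp [hu],
        fun k => by fin_cases k <;> simp [hu], ?_⟩
      ext a b; fin_cases a <;> fin_cases b <;> simp [hx, hxij]
      linear_combination (-x 1 0) * hu'
  rw [h, l2_opNorm_diagonal_mul_mul_diagonal hα hβ]

theorem bJr_single_of_re_mul_conj_eq_zero {B : Matrix (Fin 2) (Fin 2) ℂ} (hB : B ∈ V)
    {i j : Fin 2} (hij : (i, j) ≠ (0, 0)) {c : ℂ} (h : (B i j * starRingEnd ℂ c).re = 0) :
    BJr B (single i j c) := by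
  intro t
  set x := B - B i j • single i j 1
  have hx : x ∈ V := by
    show B 0 0 - B i j * single i j 1 0 0 = 0
    rw [hB, single_apply_of_ne _ _ _ _ _ fun ⟨hi, hj⟩ => hij (Prod.ext hi hj)]
    ring
  have hxij : x i j = 0 := by simp [x]
  have hB_eq : B = x + B i j • single i j 1 := by simp [x]
  have hBt_eq : B + t • single i j c = x + (B i j + t * c) • single i j 1 := by
    rw [add_smul, ← add_assoc, ← hB_eq, smul_single, smul_single, smul_eq_mul, mul_one,
      Complex.real_smul]
  rw [hBt_eq]
  nth_rw 1 [hB_eq]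
  exact norm_add_smul_le_of_norm_le
    (fun u z hu => norm_add_mul_smul_single_of_mem_V hx hij hxij hu z)
    (Complex.norm_le_norm_add_ofReal_mul h t)

theorem leftSymmRelR_V_single {i j : Fin 2} (hij : (i, j) ≠ (0, 0)) (c : ℂ) :
    LeftSymmRelR V (single i j c) :=
  ⟨single_apply_of_ne _ _ _ _ _ fun ⟨hi, hj⟩ => hij (Prod.ext hi hj), fun _ hB h =>
    bJr_single_of_re_mul_conj_eq_zero hB hij (re_mul_conj_eq_zero_of_bJr_single h)⟩

/-- Regarding `M₂(ℂ)` (Euclidean operator norm) as a real normed space, the set `L_V` of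
left-symmetric elements of `V = {X ∈ M₂(ℂ) : X₁₁ = 0}` (w.r.t. real-scalar BJ orthogonality)
contains a nonzero element, and the only `X ∈ V` with `Z ⊥ᵣ X` for all `Z ∈ L_V` is `X = 0`. -/
theorem leftSymmetric_in_V_real_total :
    (∃ Z : Matrix (Fin 2) (Fin 2) ℂ, LeftSymmRelR V Z ∧ Z ≠ 0) ∧
    ∀ X ∈ V, (∀ Z : Matrix (Fin 2) (Fin 2) ℂ, LeftSymmRelR V Z → BJr Z X) → X = 0 := by
  refine ⟨⟨single 0 1 1, leftSymmRelR_V_single (by decide) 1,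
    fun h => by simpa using congr_fun₂ h 0 1⟩, fun X hX hall => ?_⟩
  ext i j
  by_cases hij : (i, j) = (0, 0)
  · obtain ⟨rfl, rfl⟩ := Prod.mk.inj hij
    exact hX
  · simpa [Complex.mul_conj] using
      re_mul_conj_eq_zero_of_bJr_single (hall _ (leftSymmRelR_V_single hij (X i j)))
end

section
/- Let n ≥ 2 and let T = {X ∈ M_n(ℂ) : X₁₁ = 0}, where M_n(ℂ) carries the operator norm induced by the Euclidean norm and Birkhoff–James orthogonality is taken with complex scalars. Then T contains a nonzero element that is left-symmetric relative to T if and only if n = 2. -/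
open scoped Matrix.Norms.L2Operator

/-!
Matrices act isometrically as operators on `ℂⁿ`, and `T` becomes the set of operators `f` with
`⟪e, f e⟫ = 0`. Two facts about Birkhoff–James orthogonality of operators drive everything:
`Z ⊥ B` as soon as `⟪Z x, B x⟫ = 0` for a unit vector `x` at which `Z` attains its norm; and
`f = p ⊗ q* + h`, with unit `p, q`, `h q = 0`, `range h ⊥ p` and `‖h‖ < 1`, is not orthogonal
to any `g` with `⟪p, g q⟫ ≠ 0`, because `‖f - t ⟪g q, p⟫ g‖ < 1 ≤ ‖f‖` for small `t > 0`.

For `n = 2`, `Z = e₂ ⊗ e₁*` is left-symmetric: for `B ∈ T`, `Z ⊥ B` forces `B e₁ = 0`, so `B`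
factors through the projection onto `e₂`, which `Z` kills. For `n ≥ 3` and `Z ≠ 0` attaining its
norm at `x`, take a unit `s ⊥ x, e`. If `Z s ≠ 0`, then `B = (Z s / ‖Z s‖) ⊗ s*` lies in `T` and
`Z ⊥ B`, but not `B ⊥ Z`. If `Z s = 0`, a rank-two `B` built from `x, s` on the right and from
`Z x` and a unit `r ⊥ Z x, e` on the left does the same.
-/

open scoped InnerProductSpace ComplexConjugate
open InnerProductSpace (rankOne rankOne_apply comp_rankOne norm_rankOne)

section Normed

variable {E F : Type*} [NormedAddCommGroup E] [NormedSpace ℂ E]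
  [NormedAddCommGroup F] [NormedSpace ℂ F]

theorem BJ.map_iff (φ : E →ₗᵢ[ℂ] F) {u v : E} : BJ (φ u) (φ v) ↔ BJ u v := by
  simp only [BJ, ← map_smul, ← map_add, φ.norm_map]

theorem leftSymmRel_preimage_iff (φ : E ≃ₗᵢ[ℂ] F) (S : Set F) (A : E) :
    LeftSymmRel (φ ⁻¹' S) A ↔ LeftSymmRel S (φ A) := by
  simp only [LeftSymmRel, Set.mem_preimage, φ.surjective.forall, ← BJ.map_iff φ.toLinearIsometry]
  rfl

theorem BJ.of_comp_eq {B Z : E →L[ℂ] F} (P : E →L[ℂ] E) (hP : ‖P‖ ≤ 1)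
    (hB : B ∘L P = B) (hZ : Z ∘L P = 0) : BJ B Z := fun c => by
  calc ‖B‖ = ‖(B + c • Z) ∘L P‖ := by
        rw [ContinuousLinearMap.add_comp, ContinuousLinearMap.smul_comp, hB, hZ, smul_zero,
          add_zero]
    _ ≤ ‖B + c • Z‖ * ‖P‖ := ContinuousLinearMap.opNorm_comp_le _ _
    _ ≤ ‖B + c • Z‖ := mul_le_of_le_one_right (norm_nonneg _) hP

end Normed

theorem ContinuousLinearMap.exists_norm_eq_one_norm_apply_eq_opNorm {𝕜 E F : Type*} [RCLike 𝕜]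
    [NormedAddCommGroup E] [NormedSpace 𝕜 E] [FiniteDimensional 𝕜 E] [Nontrivial E]
    [NormedAddCommGroup F] [NormedSpace 𝕜 F] (f : E →L[𝕜] F) :
    ∃ x, ‖x‖ = 1 ∧ ‖f x‖ = ‖f‖ := by
  have : ProperSpace E := FiniteDimensional.proper_rclike 𝕜 E
  obtain ⟨x, hx, hmax⟩ := (isCompact_sphere (0 : E) 1).exists_isMaxOn
    (Set.nonempty_coe_sort.mp (NormedSpace.sphere_nonempty_rclike 𝕜 zero_le_one))
    f.continuous.norm.continuousOn
  rw [mem_sphere_zero_iff_norm] at hx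
  refine ⟨x, hx, le_antisymm (by simpa [hx] using f.le_opNorm x) ?_⟩
  exact f.opNorm_le_of_unit_norm (norm_nonneg _) fun y hy => hmax (mem_sphere_zero_iff_norm.mpr hy)

theorem exists_norm_eq_one_inner_eq_zero {𝕜 E : Type*} [RCLike 𝕜] [NormedAddCommGroup E]
    [InnerProductSpace 𝕜 E] [FiniteDimensional 𝕜 E] (hE : 3 ≤ Module.finrank 𝕜 E) (a b : E) :
    ∃ s : E, ‖s‖ = 1 ∧ ⟪a, s⟫_𝕜 = 0 ∧ ⟪b, s⟫_𝕜 = 0 := by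
  classical
  set V := Submodule.span 𝕜 (({a, b} : Finset E) : Set E)
  have hV : Module.finrank 𝕜 V ≤ 2 :=
    (finrank_span_finset_le_card _).trans Finset.card_le_two
  have hVperp : Vᗮ ≠ ⊥ := by
    intro h
    have := V.finrank_add_finrank_orthogonal
    rw [h, finrank_bot] at this
    omega
  obtain ⟨s, hs, hs0⟩ := Vᗮ.ne_bot_iff.mp hVperp
  refine ⟨(‖s‖⁻¹ : 𝕜) • s, norm_smul_inv_norm hs0, ?_, ?_⟩ <;>
    rw [inner_smul_right, hs _ (Submodule.subset_span (by simp)), mul_zero]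

theorem exists_pos_forall_quadratic_le {b A K : ℝ} (hb : 0 < b) (hb1 : b ≤ 1) (hA : 0 < A)
    (hAK : A ≤ K) :
    ∃ t > 0, ∀ s : ℝ, 1 - b * s ^ 2 - 2 * t * A * (1 - s ^ 2) + 4 * t * K * s + t ^ 2 * K ^ 2
      ≤ 1 - t * A := by
  have hK : 0 < K := hA.trans_le hAK
  set t := b * A / (9 * K ^ 2) with ht_def
  have ht : 0 < t := by positivity
  have htK : 9 * t * K ^ 2 = b * A := by rw [ht_def]; field_simp
  have htA : 9 * t * A ≤ b := by
    nlinarith [mul_le_mul_of_nonneg_left hAK (by positivity : 0 ≤ 9 * t * K)]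
  refine ⟨t, ht, fun s => ?_⟩
  have hgap : b * ((1 - t * A) - (1 - b * s ^ 2 - 2 * t * A * (1 - s ^ 2) + 4 * t * K * s
      + t ^ 2 * K ^ 2)) = b * (b / 2 - 2 * t * A) * s ^ 2 + (b * s - 4 * t * K) ^ 2 / 2
        + t * b * A * (1 - b) / 9 := by
    linear_combination (-(b + 8) * t / 9) * htK
  have h₁ : 0 ≤ b * (b / 2 - 2 * t * A) * s ^ 2 :=
    mul_nonneg (mul_nonneg hb.le (by linarith)) (sq_nonneg s)
  have h₂ : 0 ≤ t * b * A * (1 - b) / 9 := by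
    have : 0 ≤ 1 - b := by linarith
    positivity
  nlinarith [sq_nonneg (b * s - 4 * t * K)]

section InnerProduct

variable {E F : Type*} [NormedAddCommGroup E] [InnerProductSpace ℂ E]
  [NormedAddCommGroup F] [InnerProductSpace ℂ F]

theorem BJ.of_norm_apply_eq_opNorm {Z B : E →L[ℂ] F} {x : E} (hx : ‖x‖ = 1)
    (hZx : ‖Z x‖ = ‖Z‖) (h : ⟪Z x, B x⟫_ℂ = 0) : BJ Z B := fun c => by
  have hpyth : ‖Z x + c • B x‖ ^ 2 = ‖Z x‖ ^ 2 + ‖c • B x‖ ^ 2 := by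
    rw [norm_add_sq (𝕜 := ℂ), inner_smul_right, h, mul_zero, map_zero, mul_zero, add_zero]
  calc ‖Z‖ = ‖Z x‖ := hZx.symm
    _ ≤ ‖Z x + c • B x‖ := by nlinarith [norm_nonneg (Z x), norm_nonneg (Z x + c • B x)]
    _ ≤ ‖Z + c • B‖ := by simpa [hx] using (Z + c • B).le_opNorm x

theorem norm_sq_eq_norm_inner_sq_add_s12 {q : E} (hq : ‖q‖ = 1) (y : E) :
    ‖y‖ ^ 2 = ‖⟪q, y⟫_ℂ‖ ^ 2 + ‖y - ⟪q, y⟫_ℂ • q‖ ^ 2 := by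
  have horth : ⟪⟪q, y⟫_ℂ • q, y - ⟪q, y⟫_ℂ • q⟫_ℂ = 0 := by
    rw [inner_smul_left, inner_sub_right, inner_smul_right, inner_self_eq_norm_sq_to_K, hq]
    simp
  have := norm_add_sq_eq_norm_sq_add_norm_sq_of_inner_eq_zero _ _ horth
  rw [add_sub_cancel, norm_smul, hq, mul_one] at this
  simpa only [sq] using this

theorem norm_smul_add_smul_eq_one {a b : E} (ha : ‖a‖ = 1) (hb : ‖b‖ = 1) (hab : ⟪a, b⟫_ℂ = 0)
    {c d : ℂ} (hcd : ‖c‖ ^ 2 + ‖d‖ ^ 2 = 1) : ‖c • a + d • b‖ = 1 := by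
  have h := norm_add_sq_eq_norm_sq_add_norm_sq_of_inner_eq_zero (c • a) (d • b)
    (by rw [inner_smul_left, inner_smul_right, hab, mul_zero, mul_zero])
  rw [norm_smul, norm_smul, ha, hb, mul_one, mul_one, ← sq, ← sq, ← sq, hcd] at h
  exact (pow_eq_one_iff_of_nonneg (norm_nonneg _) two_ne_zero).mp h

variable {p : F} {q : E} {h : E →L[ℂ] F}

theorem rankOne_add_apply (hhq : h q = 0) (y : E) :
    (rankOne ℂ p q + h) y = ⟪q, y⟫_ℂ • p + h (y - ⟪q, y⟫_ℂ • q) := by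
  simp [hhq]

theorem norm_rankOne_add_apply_sq_le (hp : ‖p‖ = 1) (hq : ‖q‖ = 1) (hhq : h q = 0)
    (hph : ∀ y, ⟪p, h y⟫_ℂ = 0) (y : E) :
    ‖(rankOne ℂ p q + h) y‖ ^ 2 ≤ ‖y‖ ^ 2 - (1 - ‖h‖ ^ 2) * ‖y - ⟪q, y⟫_ℂ • q‖ ^ 2 := by
  set y' := y - ⟪q, y⟫_ℂ • q
  have hpyth : ‖(rankOne ℂ p q + h) y‖ ^ 2 = ‖⟪q, y⟫_ℂ‖ ^ 2 + ‖h y'‖ ^ 2 := by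
    rw [rankOne_add_apply hhq, norm_add_sq (𝕜 := ℂ), inner_smul_left, hph, mul_zero,
      map_zero, mul_zero, add_zero, norm_smul, hp, mul_one]
  have hhy' : ‖h y'‖ ≤ ‖h‖ * ‖y'‖ := h.le_opNorm y'
  rw [hpyth, norm_sq_eq_norm_inner_sq_add_s12 hq y]
  nlinarith [norm_nonneg (h y'), mul_nonneg (norm_nonneg h) (norm_nonneg y')]

theorem norm_inner_rankOne_add_apply_sub_le (hp : ‖p‖ = 1) (hq : ‖q‖ = 1) (hhq : h q = 0)
    (hh : ‖h‖ ≤ 1) (g : E →L[ℂ] F) {y : E} (hy : ‖y‖ ≤ 1) :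
    ‖⟪(rankOne ℂ p q + h) y, g y⟫_ℂ - (‖⟪q, y⟫_ℂ‖ ^ 2 : ℂ) * ⟪p, g q⟫_ℂ‖
      ≤ 2 * ‖g‖ * ‖y - ⟪q, y⟫_ℂ • q‖ := by
  set β := ⟪q, y⟫_ℂ
  set y' := y - β • q
  have hβ : ‖β‖ ≤ 1 := by
    simpa [hq] using (norm_inner_le_norm (𝕜 := ℂ) q y).trans (by rw [hq, one_mul]; exact hy)
  have hgpy : ⟪p, g y⟫_ℂ = β * ⟪p, g q⟫_ℂ + ⟪p, g y'⟫_ℂ := by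
    rw [← inner_smul_right, ← inner_add_right, ← map_smul, ← map_add, add_sub_cancel]
  have hsplit : ⟪(rankOne ℂ p q + h) y, g y⟫_ℂ
      = (‖β‖ ^ 2 : ℂ) * ⟪p, g q⟫_ℂ + (conj β * ⟪p, g y'⟫_ℂ + ⟪h y', g y⟫_ℂ) := by
    rw [rankOne_add_apply hhq, inner_add_left, inner_smul_left, hgpy, ← Complex.conj_mul']
    ring
  have h1 : ‖⟪p, g y'⟫_ℂ‖ ≤ ‖g‖ * ‖y'‖ := by
    simpa [hp] using (norm_inner_le_norm (𝕜 := ℂ) p (g y')).trans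
      (by rw [hp, one_mul]; exact g.le_opNorm y')
  have h2 : ‖⟪h y', g y⟫_ℂ‖ ≤ ‖g‖ * ‖y'‖ :=
    calc ‖⟪h y', g y⟫_ℂ‖ ≤ ‖h y'‖ * ‖g y‖ := norm_inner_le_norm _ _
      _ ≤ (‖h‖ * ‖y'‖) * ‖g‖ := by
        gcongr
        exacts [h.le_opNorm y', (g.le_opNorm y).trans (mul_le_of_le_one_right (norm_nonneg _) hy)]
      _ ≤ 1 * ‖y'‖ * ‖g‖ := by gcongr
      _ = ‖g‖ * ‖y'‖ := by ring
  rw [hsplit, add_sub_cancel_left]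
  calc _ ≤ ‖conj β * ⟪p, g y'⟫_ℂ‖ + ‖⟪h y', g y⟫_ℂ‖ := norm_add_le _ _
    _ ≤ 1 * (‖g‖ * ‖y'‖) + ‖g‖ * ‖y'‖ := by
      rw [norm_mul, RCLike.norm_conj]
      gcongr
    _ = 2 * ‖g‖ * ‖y'‖ := by ring

theorem norm_rankOne_add_add_smul_apply_sq_le (hp : ‖p‖ = 1) (hq : ‖q‖ = 1) (hhq : h q = 0)
    (hph : ∀ y, ⟪p, h y⟫_ℂ = 0) (hh : ‖h‖ ≤ 1) (g : E →L[ℂ] F) {t : ℝ} (ht : 0 ≤ t) {y : E}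
    (hy : ‖y‖ = 1) :
    ‖(rankOne ℂ p q + h + (-(t : ℂ) * conj ⟪p, g q⟫_ℂ) • g) y‖ ^ 2
      ≤ 1 - (1 - ‖h‖ ^ 2) * ‖y - ⟪q, y⟫_ℂ • q‖ ^ 2
        - 2 * t * ‖⟪p, g q⟫_ℂ‖ ^ 2 * (1 - ‖y - ⟪q, y⟫_ℂ • q‖ ^ 2)
        + 4 * t * (‖⟪p, g q⟫_ℂ‖ * ‖g‖) * ‖y - ⟪q, y⟫_ℂ • q‖
        + t ^ 2 * (‖⟪p, g q⟫_ℂ‖ * ‖g‖) ^ 2 := by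
  set f := rankOne ℂ p q + h
  set α := ⟪p, g q⟫_ℂ
  set β := ⟪q, y⟫_ℂ
  set s := ‖y - β • q‖
  set c : ℂ := -(t : ℂ) * conj α
  set D := ⟪f y, g y⟫_ℂ - (‖β‖ ^ 2 : ℂ) * α
  have hc : ‖c‖ = t * ‖α‖ := by simp [c, abs_of_nonneg ht]
  have hexp : ‖(f + c • g) y‖ ^ 2
      = ‖f y‖ ^ 2 + 2 * (c * ⟪f y, g y⟫_ℂ).re + ‖c‖ ^ 2 * ‖g y‖ ^ 2 := by
    rw [add_apply, smul_apply, norm_add_sq (𝕜 := ℂ),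
      inner_smul_right, norm_smul, mul_pow, RCLike.re_to_complex]
  have hfy : ‖f y‖ ^ 2 ≤ 1 - (1 - ‖h‖ ^ 2) * s ^ 2 := by
    have := norm_rankOne_add_apply_sq_le hp hq hhq hph y
    rwa [hy, one_pow] at this
  have hβ : ‖β‖ ^ 2 = 1 - s ^ 2 := by
    have := norm_sq_eq_norm_inner_sq_add_s12 hq y
    rw [hy, one_pow] at this
    linarith
  have hD : ‖D‖ ≤ 2 * ‖g‖ * s := norm_inner_rankOne_add_apply_sub_le hp hq hhq hh g hy.le
  have hre : (c * ⟪f y, g y⟫_ℂ).re ≤ -(t * ‖β‖ ^ 2 * ‖α‖ ^ 2) + t * ‖α‖ * ‖D‖ := by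
    have hmain : c * ((‖β‖ ^ 2 : ℂ) * α) = ((-(t * ‖β‖ ^ 2 * ‖α‖ ^ 2) : ℝ) : ℂ) := by
      simp only [c]
      rw [show -(t : ℂ) * conj α * ((‖β‖ ^ 2 : ℂ) * α)
        = -(t : ℂ) * ‖β‖ ^ 2 * (conj α * α) by ring, Complex.conj_mul']
      push_cast; ring
    have : ⟪f y, g y⟫_ℂ = (‖β‖ ^ 2 : ℂ) * α + D := by ring
    rw [this, mul_add, hmain, Complex.add_re, Complex.ofReal_re]
    have := (Complex.re_le_norm (c * D)).trans_eq (by rw [norm_mul, hc])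
    linarith
  have hgy : ‖c‖ ^ 2 * ‖g y‖ ^ 2 ≤ t ^ 2 * (‖α‖ * ‖g‖) ^ 2 := by
    have : ‖g y‖ ≤ ‖g‖ := by simpa [hy] using g.le_opNorm y
    rw [hc, ← mul_pow, ← mul_pow, ← mul_assoc]
    gcongr
  rw [hβ] at hre
  rw [hexp]
  linarith [mul_le_mul_of_nonneg_left hD (by positivity : (0 : ℝ) ≤ t * ‖α‖)]

theorem not_BJ_rankOne_add (hp : ‖p‖ = 1) (hq : ‖q‖ = 1) (hhq : h q = 0)
    (hph : ∀ y, ⟪p, h y⟫_ℂ = 0) (hh : ‖h‖ < 1) {g : E →L[ℂ] F} (hg : ⟪p, g q⟫_ℂ ≠ 0) :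
    ¬ BJ (rankOne ℂ p q + h) g := by
  set α := ⟪p, g q⟫_ℂ
  have hαg : ‖α‖ ≤ ‖g‖ := by
    simpa [hp, hq] using (norm_inner_le_norm (𝕜 := ℂ) p (g q)).trans
      (mul_le_mul_of_nonneg_left (g.le_opNorm q) (norm_nonneg p))
  have hA : 0 < ‖α‖ ^ 2 := by positivity
  obtain ⟨t, ht, hquad⟩ := exists_pos_forall_quadratic_le (b := 1 - ‖h‖ ^ 2)
    (by nlinarith [norm_nonneg h]) (by nlinarith) hA (K := ‖α‖ * ‖g‖)
    (by rw [sq]; gcongr)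
  have hsmall : ‖rankOne ℂ p q + h + (-(t : ℂ) * conj α) • g‖
      ≤ √(1 - t * ‖α‖ ^ 2) :=
    ContinuousLinearMap.opNorm_le_of_unit_norm (Real.sqrt_nonneg _) fun y hy =>
      Real.le_sqrt_of_sq_le <| (norm_rankOne_add_add_smul_apply_sq_le hp hq hhq hph hh.le g
        ht.le hy).trans (hquad _)
  have hlt : √(1 - t * ‖α‖ ^ 2) < 1 := by
    rw [Real.sqrt_lt' one_pos]
    nlinarith [mul_pos ht hA]
  have hone : 1 ≤ ‖rankOne ℂ p q + h‖ := by
    simpa [hhq, hp, hq, inner_self_eq_norm_sq_to_K] using (rankOne ℂ p q + h).le_opNorm q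
  exact fun hbj => (hsmall.trans_lt hlt).not_ge (hone.trans (hbj _))

end InnerProduct

section Corner

variable {E : Type*} [NormedAddCommGroup E] [InnerProductSpace ℂ E]

def cornerZero (e : E) : Set (E →L[ℂ] E) := {f | ⟪e, f e⟫_ℂ = 0}

@[simp] theorem mem_cornerZero {e : E} {f : E →L[ℂ] E} : f ∈ cornerZero e ↔ ⟪e, f e⟫_ℂ = 0 :=
  Iff.rfl

theorem exists_ne_zero_leftSymmRel_cornerZero (b : OrthonormalBasis (Fin 2) ℂ E) :
    ∃ Z ≠ 0, LeftSymmRel (cornerZero (b 0)) Z := by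
  have hb := b.orthonormal
  have h01 : ⟪b 0, b 1⟫_ℂ = 0 := hb.2 (by decide)
  refine ⟨rankOne ℂ (b 1) (b 0), fun hZ => ?_, by simp [h01], fun B hB hZB => ?_⟩
  · exact hb.ne_zero 1 (by simpa [hb.1 0, inner_self_eq_norm_sq_to_K] using congr($hZ (b 0)))
  have hB10 : ⟪b 1, B (b 0)⟫_ℂ = 0 := by
    by_contra hne
    exact not_BJ_rankOne_add (h := 0) (hb.1 1) (hb.1 0) rfl (by simp) (by simp) hne
      (by simpa using hZB)
  have hB0 : B (b 0) = 0 := by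
    rw [← b.sum_repr' (B (b 0)), Fin.sum_univ_two, mem_cornerZero.mp hB, hB10,
      zero_smul, zero_smul, add_zero]
  refine BJ.of_comp_eq (rankOne ℂ (b 1) (b 1)) (by simp [hb.1 1]) ?_ ?_
  · conv_rhs => rw [← B.comp_id, ← b.sum_rankOne_eq_id]
    simp [comp_rankOne, Fin.sum_univ_two, hB0]
  · simp [comp_rankOne, h01]

theorem exists_BJ_not_BJ_of_apply_ne_zero {Z : E →L[ℂ] E} {e x w : E} (hx : ‖x‖ = 1)
    (hZx : ‖Z x‖ = ‖Z‖) (hw : ‖w‖ = 1) (hxw : ⟪x, w⟫_ℂ = 0) (hew : ⟪e, w⟫_ℂ = 0)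
    (hZw : Z w ≠ 0) : ∃ B ∈ cornerZero e, BJ Z B ∧ ¬ BJ B Z := by
  set p := (‖Z w‖⁻¹ : ℂ) • Z w
  refine ⟨rankOne ℂ p w, ?_, ?_, ?_⟩
  · simp [inner_eq_zero_symm.mp hew]
  · exact BJ.of_norm_apply_eq_opNorm hx hZx (by simp [inner_eq_zero_symm.mp hxw])
  · have hpZw : ⟪p, Z w⟫_ℂ ≠ 0 := by
      simp [p, inner_self_eq_norm_sq_to_K, hZw]
    exact fun hBZ => not_BJ_rankOne_add (h := 0) (norm_smul_inv_norm hZw) hw rfl (by simp)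
      (by simp) hpZw (by rwa [add_zero])

theorem exists_BJ_not_BJ_of_apply_eq_zero {Z : E →L[ℂ] E} {e x s v r : E} (hx : ‖x‖ = 1)
    (hZx : ‖Z x‖ = ‖Z‖) (hs : ‖s‖ = 1) (hxs : ⟪x, s⟫_ℂ = 0) (hes : ⟪e, s⟫_ℂ = 0) (hZs : Z s = 0)
    (hv : ‖v‖ = 1) (hr : ‖r‖ = 1) (hvr : ⟪v, r⟫_ℂ = 0) (her : ⟪e, r⟫_ℂ = 0)
    (hZxr : ⟪Z x, r⟫_ℂ = 0) (hvZx : ⟪v, Z x⟫_ℂ ≠ 0) :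
    ∃ B ∈ cornerZero e, BJ Z B ∧ ¬ BJ B Z := by
  -- `3/5 · 3/5 = 9/16 · 4/5 · 4/5` makes `⟪e, B e⟫` and `⟪Z x, B x⟫` vanish, and `‖h‖ = 9/16 < 1`.
  set p := (3 / 5 : ℂ) • v + (4 / 5 : ℂ) • r
  set u := (4 / 5 : ℂ) • v + (-3 / 5 : ℂ) • r
  set q := (3 / 5 : ℂ) • x + (4 / 5 : ℂ) • s
  set w := (4 / 5 : ℂ) • x + (-3 / 5 : ℂ) • s
  set h := (-9 / 16 : ℂ) • rankOne ℂ u w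
  have hsx := inner_eq_zero_symm.mp hxs
  have hcoef : ‖(3 / 5 : ℂ)‖ ^ 2 + ‖(4 / 5 : ℂ)‖ ^ 2 = 1 := by norm_num
  have hcoef' : ‖(4 / 5 : ℂ)‖ ^ 2 + ‖(-3 / 5 : ℂ)‖ ^ 2 = 1 := by norm_num
  have hp : ‖p‖ = 1 := norm_smul_add_smul_eq_one hv hr hvr hcoef
  have hq : ‖q‖ = 1 := norm_smul_add_smul_eq_one hx hs hxs hcoef
  have hu : ‖u‖ = 1 := norm_smul_add_smul_eq_one hv hr hvr hcoef'
  have hw : ‖w‖ = 1 := norm_smul_add_smul_eq_one hx hs hxs hcoef'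
  have hpu : ⟪p, u⟫_ℂ = 0 := by
    norm_num [p, u, inner_add_left, inner_add_right, inner_smul_left, inner_smul_right,
      Complex.conj_ofNat, inner_self_eq_norm_sq_to_K, hv, hr, hvr, inner_eq_zero_symm.mp hvr]
  have hwq : ⟪w, q⟫_ℂ = 0 := by
    norm_num [q, w, inner_add_left, inner_add_right, inner_smul_left, inner_smul_right,
      Complex.conj_ofNat, inner_self_eq_norm_sq_to_K, hx, hs, hxs, hsx]
  have hqx : ⟪q, x⟫_ℂ = 3 / 5 := by simp [q, inner_self_eq_norm_sq_to_K, hx, hsx]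
  have hwx : ⟪w, x⟫_ℂ = 4 / 5 := by simp [w, inner_self_eq_norm_sq_to_K, hx, hsx]
  have hqe : ⟪q, e⟫_ℂ = 3 / 5 * ⟪x, e⟫_ℂ := by simp [q, inner_eq_zero_symm.mp hes, mul_comm]
  have hwe : ⟪w, e⟫_ℂ = 4 / 5 * ⟪x, e⟫_ℂ := by simp [w, inner_eq_zero_symm.mp hes, mul_comm]
  have hpa : ∀ a, ⟪a, r⟫_ℂ = 0 → ⟪a, p⟫_ℂ = 3 / 5 * ⟪a, v⟫_ℂ := fun a ha => by simp [p, ha]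
  have hua : ∀ a, ⟪a, r⟫_ℂ = 0 → ⟪a, u⟫_ℂ = 4 / 5 * ⟪a, v⟫_ℂ := fun a ha => by simp [u, ha]
  have hB : ∀ a b, ⟪a, (rankOne ℂ p q + h) b⟫_ℂ = ⟪q, b⟫_ℂ * ⟪a, p⟫_ℂ
      - 9 / 16 * (⟪w, b⟫_ℂ * ⟪a, u⟫_ℂ) := fun a b => by
    simp only [h, add_apply, smul_apply, rankOne_apply, inner_add_right, inner_smul_right]
    ring
  refine ⟨rankOne ℂ p q + h, ?_, ?_, ?_⟩
  · rw [mem_cornerZero, hB, hqe, hwe, hpa e her, hua e her]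
    ring
  · refine BJ.of_norm_apply_eq_opNorm hx hZx ?_
    rw [hB, hqx, hwx, hpa _ hZxr, hua _ hZxr]
    ring
  · refine not_BJ_rankOne_add hp hq ?_ ?_ ?_ ?_
    · simp [h, hwq]
    · simp [h, hpu]
    · rw [norm_smul, norm_rankOne, hu, hw]
      norm_num
    · simp [p, q, hZs, inner_eq_zero_symm.mp hZxr, hvZx]

theorem not_leftSymmRel_cornerZero [FiniteDimensional ℂ E] (hE : 3 ≤ Module.finrank ℂ E)
    (e : E) {Z : E →L[ℂ] E} (hZ : Z ≠ 0) : ¬ LeftSymmRel (cornerZero e) Z := by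
  rintro ⟨-, hsymm⟩
  suffices ∃ B ∈ cornerZero e, BJ Z B ∧ ¬ BJ B Z by
    obtain ⟨B, hB, hZB, hBZ⟩ := this
    exact hBZ (hsymm B hB hZB)
  have : Nontrivial E := Module.nontrivial_of_finrank_pos (R := ℂ) (by omega)
  obtain ⟨x, hx, hZx⟩ := Z.exists_norm_eq_one_norm_apply_eq_opNorm
  obtain ⟨s, hs, hxs, hes⟩ := exists_norm_eq_one_inner_eq_zero hE x e
  by_cases hZs : Z s = 0
  · have hZx0 : Z x ≠ 0 := by rwa [← norm_ne_zero_iff, hZx, norm_ne_zero_iff]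
    obtain ⟨r, hr, hZxr, her⟩ := exists_norm_eq_one_inner_eq_zero hE (Z x) e
    exact exists_BJ_not_BJ_of_apply_eq_zero (v := (‖Z x‖⁻¹ : ℂ) • Z x) hx hZx hs hxs hes hZs
      (norm_smul_inv_norm hZx0) hr (by simp [hZxr]) her hZxr
      (by simp [inner_self_eq_norm_sq_to_K, hZx0])
  · exact exists_BJ_not_BJ_of_apply_ne_zero hx hZx hs hxs hes hZs

end Corner

noncomputable def Matrix.toEuclideanCLMₗᵢ (ι : Type*) [Fintype ι] [DecidableEq ι] :
    Matrix ι ι ℂ ≃ₗᵢ[ℂ] (EuclideanSpace ℂ ι →L[ℂ] EuclideanSpace ℂ ι) :=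
  { (Matrix.toEuclideanCLM (n := ι) (𝕜 := ℂ)).toAlgEquiv.toLinearEquiv with
    norm_map' := fun _ => rfl }

theorem Matrix.inner_single_toEuclideanCLMₗᵢ_single {ι : Type*} [Fintype ι] [DecidableEq ι]
    (X : Matrix ι ι ℂ) (i j : ι) :
    ⟪EuclideanSpace.single i 1, toEuclideanCLMₗᵢ ι X (EuclideanSpace.single j 1)⟫_ℂ = X i j := by
  change ⟪_, toEuclideanCLM (𝕜 := ℂ) X _⟫_ℂ = _
  simp [EuclideanSpace.inner_single_left, Matrix.ofLp_toEuclideanCLM, Matrix.mulVec_single]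

/-- For `n ≥ 2`, the subspace `T = {X ∈ M_n(ℂ) : X₁₁ = 0}` (Euclidean operator norm,
complex scalars) contains a nonzero element left-symmetric relative to `T` iff `n = 2`. -/
theorem leftSymmetric_in_T_iff_two {n : ℕ} (hn : 2 ≤ n)
    (T : Set (Matrix (Fin n) (Fin n) ℂ))
    (hT : T = {X | X ⟨0, by omega⟩ ⟨0, by omega⟩ = 0}) :
    (∃ Z : Matrix (Fin n) (Fin n) ℂ, Z ∈ T ∧ Z ≠ 0 ∧ LeftSymmRel T Z) ↔ n = 2 := by
  set φ := Matrix.toEuclideanCLMₗᵢ (Fin n)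
  set e : EuclideanSpace ℂ (Fin n) := EuclideanSpace.single ⟨0, by omega⟩ 1
  have hTφ : T = φ ⁻¹' cornerZero e := by
    ext X
    simp [hT, φ, e, Matrix.inner_single_toEuclideanCLMₗᵢ_single]
  have hTe : (∃ Z, Z ∈ T ∧ Z ≠ 0 ∧ LeftSymmRel T Z) ↔ ∃ f ≠ 0, LeftSymmRel (cornerZero e) f := by
    simp only [hTφ, Set.mem_preimage, leftSymmRel_preimage_iff, ne_eq, ← φ.map_eq_zero_iff]
    refine ⟨fun ⟨Z, _, hZ, hsymm⟩ => ⟨φ Z, hZ, hsymm⟩, fun ⟨f, hf, hsymm⟩ => ⟨φ.symm f, ?_⟩⟩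
    simpa using ⟨hsymm.1, hf, hsymm⟩
  rw [hTe]
  constructor
  · rintro ⟨f, hf, hsymm⟩
    by_contra hn2
    exact not_leftSymmRel_cornerZero (by rw [finrank_euclideanSpace_fin]; omega) e hf hsymm
  · rintro rfl
    convert exists_ne_zero_leftSymmRel_cornerZero (EuclideanSpace.basisFun (Fin 2) ℂ)
    simp [e]
end

section
/- Let x, y, z be n-tuples of quaternions. Then the real part of ∑ᵢ conj(zᵢ)·(xᵢ + yᵢ·μ) equals 0 for every quaternion μ with ‖μ‖ = 1 if and only if the real part of ∑ᵢ conj(zᵢ)·xᵢ equals 0 and ∑ᵢ conj(zᵢ)·yᵢ = 0. -/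
open Quaternion

namespace Quaternion

theorem eq_zero_of_forall_norm_eq_one_re_mul_eq_zero {q : ℍ[ℝ]}
    (h : ∀ μ : ℍ[ℝ], ‖μ‖ = 1 → (q * μ).re = 0) : q = 0 := by
  by_contra hq
  have hq' : ‖q‖ ≠ 0 := norm_ne_zero_iff.mpr hq
  -- `μ = ‖q‖⁻¹ • star q` gives `(q * μ).re = ‖q‖`
  have hμ : ‖‖q‖⁻¹ • star q‖ = 1 := by
    rw [norm_smul, norm_inv, norm_norm, norm_star, inv_mul_cancel₀ hq']
  have := h _ hμ
  rw [mul_smul_comm, re_smul, self_mul_star, re_coe, normSq_eq_norm_mul_self, smul_eq_mul,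
    inv_mul_cancel_left₀ hq'] at this
  exact hq' this

theorem forall_norm_eq_one_re_add_mul_eq_zero_iff (r q : ℍ[ℝ]) :
    (∀ μ : ℍ[ℝ], ‖μ‖ = 1 → (r + q * μ).re = 0) ↔ r.re = 0 ∧ q = 0 := by
  constructor
  · intro h
    have hr : r.re = 0 := by
      have h₁ := h 1 norm_one
      have h₂ := h (-1) (by rw [norm_neg, norm_one])
      rw [re_add, mul_one] at h₁
      rw [re_add, mul_neg_one, re_neg] at h₂
      linarith
    refine ⟨hr, eq_zero_of_forall_norm_eq_one_re_mul_eq_zero fun μ hμ => ?_⟩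
    simpa [hr] using h μ hμ
  · rintro ⟨hr, rfl⟩ μ -
    rw [zero_mul, add_zero, hr]

end Quaternion

/-- For `n`-tuples of quaternions `x, y, z`: `Re⟨x + y·μ, z⟩ = 0` for every unimodular
quaternion `μ` iff `Re⟨x, z⟩ = 0` and `⟨y, z⟩ = 0` (where `⟨u, v⟩ = ∑ conj(vᵢ)·uᵢ` and the
scalar `μ` multiplies `y` on the right, entrywise). -/
theorem re_pairing_unimodular_quaternion {n : ℕ} (x y z : Fin n → Quaternion ℝ) :
    (∀ μ : Quaternion ℝ, ‖μ‖ = 1 →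
        (∑ i, star (z i) * (x i + y i * μ)).re = 0) ↔
      ((∑ i, star (z i) * x i).re = 0 ∧ ∑ i, star (z i) * y i = 0) := by
  simp only [mul_add, ← mul_assoc, Finset.sum_add_distrib, ← Finset.sum_mul]
  exact forall_norm_eq_one_re_add_mul_eq_zero_iff _ _
end

section
/- Let a, b, q ∈ ℂ with q purely imaginary (Re q = 0) and |q| = 1, and let B ∈ M₂(ℂ) be the matrix with entries B₁₁ = 0, B₁₂ = a, B₂₁ = b, B₂₂ = q, where M₂(ℂ) carries the operator norm induced by the Euclidean norm on ℂ². Then ‖B‖² = (√((|a|² + |b|² + 1)² − 4|a|²|b|²) + |a|² + |b|² + 1)/2; moreover, setting λ = ‖B‖² − 1 − |a|² and x = (q·λ, conj(q)·b·q) ∈ ℂ², one has ‖Bx‖ = ‖B‖·‖x‖ and Re⟨Bx, E₂₂x⟩ = 0, where E₂₂ is the matrix unit with 1 in position (2,2). -/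
/-!
`‖B‖²` is the largest eigenvalue `μ` of `BᴴB = !![|b|², b̄q; q̄b, |a|² + 1]`, the larger root of
`μ² - (|a|² + |b|² + 1)μ + |a|²|b|²`. The bound `‖Bv‖² ≤ μ‖v‖²` follows from
`|bv₀ + qv₁| ≤ |b||v₀| + |v₁|`, which reduces it to the same bound for the real matrix
`!![0, |a|; |b|, 1]`. Since `‖Bv‖² = ⟨v, BᴴBv⟩`, it is attained at the eigenvectors
`(q b̄, μ - |b|²)` and `x = (qλ, b)` of `BᴴB` for `μ`. Finally `⟨E₂₂x, Bx⟩ = (λ + 1)|b|² q` is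
purely imaginary.
-/

open scoped Matrix.Norms.L2Operator
open Matrix

/-- The larger root of `μ² - (α + β + 1)μ + αβ`. -/
noncomputable def largerRoot (α β : ℝ) : ℝ :=
  (√((α + β + 1) ^ 2 - 4 * α * β) + α + β + 1) / 2

section largerRoot

variable {α β : ℝ}

lemma largerRoot_sub_mul_sub (hβ : 0 ≤ β) :
    (largerRoot α β - β) * (largerRoot α β - α - 1) = β := by
  have hdisc : 0 ≤ (α + β + 1) ^ 2 - 4 * α * β := by nlinarith [sq_nonneg (α + 1 - β)]
  unfold largerRoot
  linear_combination Real.sq_sqrt hdisc / 4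

lemma lt_largerRoot (hα : 0 ≤ α) (hβ : 0 ≤ β) : β < largerRoot α β := by
  have hdisc : (α + β + 1) ^ 2 - 4 * α * β = (α + 1 - β) ^ 2 + 4 * β := by ring
  have hsq := Real.sq_sqrt (hdisc ▸ by positivity : 0 ≤ (α + β + 1) ^ 2 - 4 * α * β)
  unfold largerRoot
  nlinarith [Real.sqrt_nonneg ((α + β + 1) ^ 2 - 4 * α * β)]

lemma mul_sq_add_sq_le {μ γ : ℝ} (hμ : β < μ) (hprod : (μ - β) * (μ - α - 1) = β)
    (hγ : γ ^ 2 = β) (s t : ℝ) : α * t ^ 2 + (γ * s + t) ^ 2 ≤ μ * (s ^ 2 + t ^ 2) := by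
  have key : (μ - β) * (μ * (s ^ 2 + t ^ 2) - α * t ^ 2 - (γ * s + t) ^ 2)
      = ((μ - β) * s - γ * t) ^ 2 := by
    linear_combination (-(μ - β) * s ^ 2 - t ^ 2) * hγ + t ^ 2 * hprod
  nlinarith [sq_nonneg ((μ - β) * s - γ * t)]

end largerRoot

lemma EuclideanSpace.norm_sq_fin_two {𝕜 : Type*} [RCLike 𝕜] (v : EuclideanSpace 𝕜 (Fin 2)) :
    ‖v‖ ^ 2 = ‖v 0‖ ^ 2 + ‖v 1‖ ^ 2 := by
  simp [EuclideanSpace.norm_sq_eq, Fin.sum_univ_two]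

lemma Matrix.toEuclideanLin_fin_two {𝕜 : Type*} [RCLike 𝕜] (a b c d : 𝕜)
    (v : EuclideanSpace 𝕜 (Fin 2)) :
    toEuclideanLin !![a, b; c, d] v = !₂[a * v 0 + b * v 1, c * v 0 + d * v 1] := by
  rw [toLpLin_apply, mulVec_fin_two]
  rfl

lemma Matrix.norm_toEuclideanLin_of_conjTranspose_mul_self_mulVec {𝕜 m n : Type*} [RCLike 𝕜]
    [Fintype m] [Fintype n] [DecidableEq n] (M : Matrix m n 𝕜) (μ : ℝ) (v : EuclideanSpace 𝕜 n)
    (hv : (Mᴴ * M) *ᵥ v = (μ : 𝕜) • v) :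
    ‖toEuclideanLin M v‖ = √μ * ‖v‖ := by
  have hinner : inner 𝕜 (toEuclideanLin M v) (toEuclideanLin M v) = (μ : 𝕜) * inner 𝕜 v v := by
    simp only [EuclideanSpace.inner_eq_star_dotProduct, toLpLin_apply, star_mulVec]
    rw [dotProduct_comm, ← dotProduct_mulVec, mulVec_mulVec, hv, dotProduct_smul, smul_eq_mul,
      dotProduct_comm]
  have hsq : ‖toEuclideanLin M v‖ ^ 2 = μ * ‖v‖ ^ 2 := by
    rw [norm_sq_eq_re_inner (𝕜 := 𝕜), norm_sq_eq_re_inner (𝕜 := 𝕜), hinner, RCLike.re_ofReal_mul]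
  rw [← Real.sqrt_sq (norm_nonneg (toEuclideanLin M v)), hsq, Real.sqrt_mul' _ (sq_nonneg _),
    Real.sqrt_sq (norm_nonneg _)]

section qMatrix

variable (a b q : ℂ)

lemma conj_mul_self_of_norm_eq_one (hq : ‖q‖ = 1) : starRingEnd ℂ q * q = 1 := by
  rw [Complex.conj_mul', hq]
  norm_num

lemma conjTranspose_mul_self_mulVec_eq_smul (hq : ‖q‖ = 1) (α β μ : ℂ)
    (h₀ : starRingEnd ℂ b * β = (μ - ‖b‖ ^ 2) * α) (h₁ : b * α = (μ - ‖a‖ ^ 2 - 1) * β) :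
    (!![0, a; b, q]ᴴ * !![0, a; b, q]) *ᵥ ![q * α, β] = μ • ![q * α, β] := by
  have ha : starRingEnd ℂ a * a = ‖a‖ ^ 2 := Complex.conj_mul' a
  have hb : starRingEnd ℂ b * b = ‖b‖ ^ 2 := Complex.conj_mul' b
  ext i
  fin_cases i <;>
    simp only [Fin.zero_eta, Fin.mk_one, Fin.isValue, mulVec_fin_two, mul_apply,
      conjTranspose_apply, of_apply, cons_val', cons_val_zero, cons_val_one, cons_val_fin_one,
      RCLike.star_def, Fin.sum_univ_two, map_zero, mul_zero, zero_add, zero_mul, Pi.smul_apply,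
      smul_eq_mul]
  · linear_combination q * h₀ + q * α * hb
  · linear_combination (b * α + β) * conj_mul_self_of_norm_eq_one q hq + β * ha + h₁

lemma norm_toEuclideanLin_le_sqrt_largerRoot (hq : ‖q‖ = 1) (v : EuclideanSpace ℂ (Fin 2)) :
    ‖toEuclideanLin !![0, a; b, q] v‖ ≤ √(largerRoot (‖a‖ ^ 2) (‖b‖ ^ 2)) * ‖v‖ := by
  set μ := largerRoot (‖a‖ ^ 2) (‖b‖ ^ 2)
  have htri : ‖b * v 0 + q * v 1‖ ≤ ‖b‖ * ‖v 0‖ + ‖v 1‖ := by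
    simpa [hq] using norm_add_le (b * v 0) (q * v 1)
  have hsq : ‖toEuclideanLin !![0, a; b, q] v‖ ^ 2 ≤ μ * ‖v‖ ^ 2 := by
    rw [toEuclideanLin_fin_two, EuclideanSpace.norm_sq_fin_two, EuclideanSpace.norm_sq_fin_two]
    calc ‖0 * v 0 + a * v 1‖ ^ 2 + ‖b * v 0 + q * v 1‖ ^ 2
        ≤ ‖a‖ ^ 2 * ‖v 1‖ ^ 2 + (‖b‖ * ‖v 0‖ + ‖v 1‖) ^ 2 := by
          simp only [zero_mul, zero_add, norm_mul, mul_pow]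
          gcongr
      _ ≤ μ * (‖v 0‖ ^ 2 + ‖v 1‖ ^ 2) :=
          mul_sq_add_sq_le (lt_largerRoot (sq_nonneg _) (sq_nonneg _))
            (largerRoot_sub_mul_sub (sq_nonneg _)) rfl _ _
  calc ‖toEuclideanLin !![0, a; b, q] v‖
      = √(‖toEuclideanLin !![0, a; b, q] v‖ ^ 2) := (Real.sqrt_sq (norm_nonneg _)).symm
    _ ≤ √(μ * ‖v‖ ^ 2) := Real.sqrt_le_sqrt hsq
    _ = √μ * ‖v‖ := by rw [Real.sqrt_mul' _ (sq_nonneg _), Real.sqrt_sq (norm_nonneg _)]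

lemma l2_opNorm_eq_sqrt_largerRoot (hq : ‖q‖ = 1) :
    ‖!![0, a; b, q]‖ = √(largerRoot (‖a‖ ^ 2) (‖b‖ ^ 2)) := by
  set μ := largerRoot (‖a‖ ^ 2) (‖b‖ ^ 2)
  have hμ : ‖b‖ ^ 2 < μ := lt_largerRoot (sq_nonneg _) (sq_nonneg _)
  have hprod : ((μ : ℂ) - ‖b‖ ^ 2) * (μ - ‖a‖ ^ 2 - 1) = ‖b‖ ^ 2 := by
    exact_mod_cast largerRoot_sub_mul_sub (sq_nonneg ‖b‖)
  let w : EuclideanSpace ℂ (Fin 2) := !₂[q * starRingEnd ℂ b, μ - ‖b‖ ^ 2]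
  have hw : ‖toEuclideanLin !![0, a; b, q] w‖ = √μ * ‖w‖ :=
    norm_toEuclideanLin_of_conjTranspose_mul_self_mulVec _ μ w <|
      conjTranspose_mul_self_mulVec_eq_smul a b q hq (starRingEnd ℂ b) (μ - ‖b‖ ^ 2) μ
        (mul_comm _ _) <| by linear_combination Complex.mul_conj' b - hprod
  have hw_pos : 0 < ‖w‖ := by
    refine norm_pos_iff.2 fun h => (sub_pos.2 hμ).ne' ?_
    have h₁ : ((μ - ‖b‖ ^ 2 : ℝ) : ℂ) = 0 := by
      push_cast
      exact congrArg (fun v : EuclideanSpace ℂ (Fin 2) => v 1) h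
    exact_mod_cast h₁
  rw [l2_opNorm_def]
  refine ContinuousLinearMap.opNorm_eq_of_bounds (Real.sqrt_nonneg _)
    (norm_toEuclideanLin_le_sqrt_largerRoot a b q hq) fun N _ hN => ?_
  exact le_of_mul_le_mul_right (hw ▸ hN w) hw_pos

lemma norm_toEuclideanLin_eigenvector_eq (hq : ‖q‖ = 1) :
    ‖toEuclideanLin !![0, a; b, q] !₂[q * (largerRoot (‖a‖ ^ 2) (‖b‖ ^ 2) - 1 - ‖a‖ ^ 2 : ℝ), b]‖
      = √(largerRoot (‖a‖ ^ 2) (‖b‖ ^ 2))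
        * ‖!₂[q * (largerRoot (‖a‖ ^ 2) (‖b‖ ^ 2) - 1 - ‖a‖ ^ 2 : ℝ), b]‖ := by
  set μ := largerRoot (‖a‖ ^ 2) (‖b‖ ^ 2)
  have hprod : ((μ : ℂ) - ‖b‖ ^ 2) * (μ - ‖a‖ ^ 2 - 1) = ‖b‖ ^ 2 := by
    exact_mod_cast largerRoot_sub_mul_sub (sq_nonneg ‖b‖)
  refine norm_toEuclideanLin_of_conjTranspose_mul_self_mulVec _ μ _ <|
    conjTranspose_mul_self_mulVec_eq_smul a b q hq _ b μ ?_ (by push_cast; ring)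
  push_cast
  linear_combination Complex.conj_mul' b - hprod

lemma re_inner_toEuclideanLin_single_one_one_eq_zero (hqim : q.re = 0) (r : ℝ) :
    (inner ℂ (toEuclideanLin (single 1 1 (1 : ℂ)) !₂[q * r, b])
      (toEuclideanLin !![0, a; b, q] !₂[q * r, b])).re = 0 := by
  have hsingle : single 1 1 (1 : ℂ) = !![0, 0; 0, 1] := by
    ext i j
    fin_cases i <;> fin_cases j <;> rfl
  have hinner : inner ℂ (toEuclideanLin (single 1 1 (1 : ℂ)) !₂[q * r, b])
      (toEuclideanLin !![0, a; b, q] !₂[q * r, b]) = q * ((r + 1) * ‖b‖ ^ 2 : ℝ) := by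
    rw [hsingle, toEuclideanLin_fin_two, toEuclideanLin_fin_two, EuclideanSpace.inner_toLp_toLp]
    simp only [dotProduct, Fin.sum_univ_two, cons_val_zero, cons_val_one, cons_val_fin_one,
      Pi.star_apply, RCLike.star_def, map_zero, zero_mul, mul_zero, zero_add, add_zero, one_mul]
    push_cast
    linear_combination q * (r + 1) * Complex.mul_conj' b
  rw [hinner, Complex.re_mul_ofReal, hqim, zero_mul]

end qMatrix

/-- For `q ∈ ℂ` purely imaginary and unimodular, the norm of `B = !![0, a; b, q]` in the
Euclidean operator norm is given by the stated formula, and with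
`λ = ‖B‖² − 1 − |a|²` and `x = (q·λ, conj(q)·b·q)`, the vector `x` is norm-attaining for `B`
and `Re⟨Bx, E₂₂x⟩ = 0`. -/
theorem norm_and_orthogonality_q_matrix (a b q : ℂ) (hqim : q.re = 0) (hq : ‖q‖ = 1)
    (B : Matrix (Fin 2) (Fin 2) ℂ) (hB : B = !![0, a; b, q])
    (lam : ℝ) (hlam : lam = ‖B‖ ^ 2 - 1 - ‖a‖ ^ 2)
    (x : EuclideanSpace ℂ (Fin 2))
    (hx : x = (WithLp.equiv 2 (Fin 2 → ℂ)).symm ![q * (lam : ℂ), starRingEnd ℂ q * b * q]) :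
    ‖B‖ ^ 2 = (Real.sqrt ((‖a‖ ^ 2 + ‖b‖ ^ 2 + 1) ^ 2 - 4 * ‖a‖ ^ 2 * ‖b‖ ^ 2)
        + ‖a‖ ^ 2 + ‖b‖ ^ 2 + 1) / 2 ∧
    ‖Matrix.toEuclideanLin B x‖ = ‖B‖ * ‖x‖ ∧
    (inner (𝕜 := ℂ) (Matrix.toEuclideanLin (Matrix.single 1 1 (1 : ℂ)) x)
        (Matrix.toEuclideanLin B x)).re = 0 := by
  subst hB hx
  set μ := largerRoot (‖a‖ ^ 2) (‖b‖ ^ 2)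
  have hnorm := l2_opNorm_eq_sqrt_largerRoot a b q hq
  have hB2 : ‖!![0, a; b, q]‖ ^ 2 = μ := by
    rw [hnorm, Real.sq_sqrt ((sq_nonneg _).trans (lt_largerRoot (sq_nonneg _) (sq_nonneg _)).le)]
  rw [hB2] at hlam
  subst hlam
  have hqbq : starRingEnd ℂ q * b * q = b := by
    linear_combination b * conj_mul_self_of_norm_eq_one q hq
  rw [hqbq]
  exact ⟨hB2, hnorm ▸ norm_toEuclideanLin_eigenvector_eq a b q hq,
    re_inner_toEuclideanLin_single_one_one_eq_zero a b q hqim _⟩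
end
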